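/- arXiv:2006.15999 — 5 statements merged into one kernel-verified Lean document; each statement's English description precedes it below -/
import Mathlib

section
/- There exists a constant C > 0 such that for every integer n ≥ 2 and every n×n 2D-string A over any alphabet, the number of distinct thin quartics occurring as subarrays of A (two occurrences with equal content count once) is at most C · n² · (log₂ n)². -/
open scoped Classical

namespace Formal

variable {α : Type*}

/-! ### 2D-strings

An `m × n` 2D-string is modelled as a function `A : ℕ → ℕ → α` considered on
`[0, m) × [0, n)` (0-based indices).  The subarray with top-left corner `(i, j)`,
`r` rows and `c` columns is the window `A[i..i+r-1, j..j+c-1]`. -/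

/-- `p` is a horizontal period of the `r × c` subarray of `A` with top-left corner `(i,j)`:
column `y` equals column `y + p` whenever both are inside the window. -/
def HPeriod (A : ℕ → ℕ → α) (i j r c p : ℕ) : Prop :=
  ∀ x < r, ∀ y, y + p < c → A (i + x) (j + y) = A (i + x) (j + (y + p))

/-- The smallest (positive) horizontal period of the `r × c` subarray of `A`
with top-left corner `(i,j)`. -/
noncomputable def hper (A : ℕ → ℕ → α) (i j r c : ℕ) : ℕ :=
  sInf {p | 0 < p ∧ HPeriod A i j r c p}

/-- `q` is a vertical period of the `r × c` subarray of `A` with top-left corner `(i,j)`. -/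
def VPeriod (A : ℕ → ℕ → α) (i j r c q : ℕ) : Prop :=
  ∀ y < c, ∀ x, x + q < r → A (i + x) (j + y) = A (i + (x + q)) (j + y)

/-- The smallest (positive) vertical period of the `r × c` subarray of `A`
with top-left corner `(i,j)`. -/
noncomputable def vper (A : ℕ → ℕ → α) (i j r c : ℕ) : ℕ :=
  sInf {q | 0 < q ∧ VPeriod A i j r c q}

/-- The pair (smallest horizontal period, smallest vertical period). -/
noncomputable def pers (A : ℕ → ℕ → α) (i j r c : ℕ) : ℕ × ℕ :=
  (hper A i j r c, vper A i j r c)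

/-- The subarray `A[i1..i2, j1..j2]` (inclusive, 0-based) of the `n × n` 2D-string `A`
is a 2D-run: it is horizontally and vertically periodic, and every extension by one
adjacent row or column (whenever it exists within `A`) changes the smallest horizontal
or vertical period. -/
def IsRun2D (A : ℕ → ℕ → α) (n i1 i2 j1 j2 : ℕ) : Prop :=
  i1 ≤ i2 ∧ i2 < n ∧ j1 ≤ j2 ∧ j2 < n ∧
  2 * hper A i1 j1 (i2 - i1 + 1) (j2 - j1 + 1) ≤ j2 - j1 + 1 ∧
  2 * vper A i1 j1 (i2 - i1 + 1) (j2 - j1 + 1) ≤ i2 - i1 + 1 ∧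
  (0 < i1 →
    pers A (i1 - 1) j1 (i2 - i1 + 2) (j2 - j1 + 1) ≠ pers A i1 j1 (i2 - i1 + 1) (j2 - j1 + 1)) ∧
  (i2 + 1 < n →
    pers A i1 j1 (i2 - i1 + 2) (j2 - j1 + 1) ≠ pers A i1 j1 (i2 - i1 + 1) (j2 - j1 + 1)) ∧
  (0 < j1 →
    pers A i1 (j1 - 1) (i2 - i1 + 1) (j2 - j1 + 2) ≠ pers A i1 j1 (i2 - i1 + 1) (j2 - j1 + 1)) ∧
  (j2 + 1 < n →
    pers A i1 j1 (i2 - i1 + 1) (j2 - j1 + 2) ≠ pers A i1 j1 (i2 - i1 + 1) (j2 - j1 + 1))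

/-- The subarray `A[i1..i2, j1..j2]` of the `n × n` 2D-string `A` is a horizontal run:
it is horizontally periodic and extending it by the column to the left or to the right
(whenever it exists within `A`) changes the smallest horizontal period. -/
def IsHRun (A : ℕ → ℕ → α) (n i1 i2 j1 j2 : ℕ) : Prop :=
  i1 ≤ i2 ∧ i2 < n ∧ j1 ≤ j2 ∧ j2 < n ∧
  2 * hper A i1 j1 (i2 - i1 + 1) (j2 - j1 + 1) ≤ j2 - j1 + 1 ∧
  (0 < j1 →
    hper A i1 (j1 - 1) (i2 - i1 + 1) (j2 - j1 + 2) ≠ hper A i1 j1 (i2 - i1 + 1) (j2 - j1 + 1)) ∧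
  (j2 + 1 < n →
    hper A i1 j1 (i2 - i1 + 1) (j2 - j1 + 2) ≠ hper A i1 j1 (i2 - i1 + 1) (j2 - j1 + 1))

/-- The content of the `h × w` subarray of `A` with top-left corner `(i,j)`, encoded
as (height, width, entries).  Two subarrays are equal as arrays iff their contents
are equal. -/
def content (A : ℕ → ℕ → α) (i j h w : ℕ) : ℕ × ℕ × (ℕ → ℕ → Option α) :=
  (h, w, fun x y => if x < h ∧ y < w then some (A (i + x) (j + y)) else none)

/-- The `(a*h) × (b*w)` subarray of `A` with top-left corner `(i,j)` equals `W^{a,b}`,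
where `W` is its own top-left `h × w` block: the subarray is tiled by `a × b` copies
of this block. -/
def OccPow (A : ℕ → ℕ → α) (i j h w a b : ℕ) : Prop :=
  ∀ x < a * h, ∀ y < b * w, A (i + x) (j + y) = A (i + x % h) (j + y % w)

/-- The array `W^{a,b}`, where `W` is an (abstract) `h × w` array, occurs in `A`
at top-left corner `(i,j)`. -/
def OccAt (A : ℕ → ℕ → α) (i j : ℕ) (W : ℕ → ℕ → α) (h w a b : ℕ) : Prop :=
  ∀ x < a * h, ∀ y < b * w, A (i + x) (j + y) = W (x % h) (y % w)

/-- The `h × w` array `W` is primitive: `W = B^{α,β}` implies `α = β = 1`,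
i.e. if `W` is tiled by copies of its top-left `p × q` block with `p ∣ h`, `q ∣ w`,
then `p = h` and `q = w`. -/
def PrimitiveA (W : ℕ → ℕ → α) (h w : ℕ) : Prop :=
  0 < h ∧ 0 < w ∧ ∀ p q, 0 < p → 0 < q → p ∣ h → q ∣ w →
    (∀ x < h, ∀ y < w, W x y = W (x % p) (y % q)) → p = h ∧ q = w

/-- The `h × w` array `W` equals the `h' × w'` array `W'` (as arrays). -/
def ArrEq (W : ℕ → ℕ → α) (h w : ℕ) (W' : ℕ → ℕ → α) (h' w' : ℕ) : Prop :=
  h = h' ∧ w = w' ∧ ∀ x < h, ∀ y < w, W x y = W' x y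

/-- `W` is an `(a,b)`-array, i.e. `2^a ≤ height W < 2^(a+1)` and `2^b ≤ width W < 2^(b+1)`.
Only the dimensions matter. -/
def IsABDims (a b h w : ℕ) : Prop :=
  2 ^ a ≤ h ∧ h < 2 ^ (a + 1) ∧ 2 ^ b ≤ w ∧ w < 2 ^ (b + 1)

/-- The set of contents of all distinct quartics (arrays of the form `W^{2,2}`)
occurring as subarrays of the `n × n` 2D-string `A`. -/
def QuarticContents (A : ℕ → ℕ → α) (n : ℕ) : Set (ℕ × ℕ × (ℕ → ℕ → Option α)) :=
  {c | ∃ i j h w, 0 < h ∧ 0 < w ∧ i + 2 * h ≤ n ∧ j + 2 * w ≤ n ∧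
    OccPow A i j h w 2 2 ∧ c = content A i j (2 * h) (2 * w)}

/-- The set of contents of all distinct tandems (arrays of the form `W^{1,2}`)
occurring as subarrays of the `n × n` 2D-string `A`. -/
def TandemContents (A : ℕ → ℕ → α) (n : ℕ) : Set (ℕ × ℕ × (ℕ → ℕ → Option α)) :=
  {c | ∃ i j h w, 0 < h ∧ 0 < w ∧ i + h ≤ n ∧ j + 2 * w ≤ n ∧
    OccPow A i j h w 1 2 ∧ c = content A i j h (2 * w)}

/-- The set of contents of all distinct thin quartics of the `n × n` 2D-string `A`:
quartics `W^{2a,2b}` with `W` primitive which are not primitively rooted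
(`¬(a = 1 ∧ b = 1)`) and have `a = 1` or `b = 1`. -/
def ThinQuarticContents (A : ℕ → ℕ → α) (n : ℕ) : Set (ℕ × ℕ × (ℕ → ℕ → Option α)) :=
  {c | ∃ i j h w a b, 0 < a ∧ 0 < b ∧ (a = 1 ∨ b = 1) ∧ ¬(a = 1 ∧ b = 1) ∧
    PrimitiveA (fun x y => A (i + x) (j + y)) h w ∧
    i + 2 * a * h ≤ n ∧ j + 2 * b * w ≤ n ∧
    OccPow A i j h w (2 * a) (2 * b) ∧ c = content A i j (2 * a * h) (2 * b * w)}

/-! ### 1D-strings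

A string of length `n` is modelled as `S : ℕ → α` considered on `[0, n)` (0-based). -/

/-- `p` is a period of the factor `S[i..j]` (inclusive, 0-based). -/
def FPeriod (S : ℕ → α) (i j p : ℕ) : Prop :=
  ∀ k, i ≤ k → k + p ≤ j → S k = S (k + p)

/-- The smallest (positive) period of the factor `S[i..j]`. -/
noncomputable def fper (S : ℕ → α) (i j : ℕ) : ℕ :=
  sInf {p | 0 < p ∧ FPeriod S i j p}

/-- The factor `S[i..j]` of the length-`n` string `S` is a run (maximal repetition). -/
def IsRun1D (S : ℕ → α) (n i j : ℕ) : Prop :=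
  i ≤ j ∧ j < n ∧ 2 * fper S i j ≤ j - i + 1 ∧
  (0 < i → S (i - 1) ≠ S (i - 1 + fper S i j)) ∧
  (j + 1 < n → S (j + 1) ≠ S (j + 1 - fper S i j))

/-- The factor `S[a..a+m-1]` is a primitive string: it is nonempty and is not a proper
power, i.e. it has no period `d < m` dividing `m`. -/
def PrimitiveF (S : ℕ → α) (a m : ℕ) : Prop :=
  0 < m ∧ ∀ d, 0 < d → d ∣ m → (∀ x, x + d < m → S (a + x) = S (a + (x + d))) → d = m



/-! ### Auxiliary machinery for the proof -/

section Aux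
variable {β : Type*}

variable {β : Type*}

private lemma per_tile (f : ℕ → β) (g L : ℕ) (hg : 0 < g)
    (hper : ∀ z, z + g < L → f z = f (z + g)) : ∀ z, z < L → f z = f (z % g) := by
  intro z
  induction z using Nat.strong_induction_on with
  | _ z ih =>
    intro hz
    rcases Nat.lt_or_ge z g with h | h
    · rw [Nat.mod_eq_of_lt h]
    · have h1 : f (z - g) = f z := by
        have := hper (z - g) (by omega)
        rwa [Nat.sub_add_cancel h] at this
      rw [← h1, Nat.mod_eq_sub_mod h]
      exact ih (z - g) (by omega) (by omega)

private lemma fw_core (f : ℕ → β) : ∀ (s p q L : ℕ), q ≤ s → 0 < p → p ≤ q → p + q ≤ L →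
    (∀ z, z + p < L → f z = f (z + p)) → (∀ z, z + q < L → f z = f (z + q)) →
    ∀ z, z + Nat.gcd p q < L → f z = f (z + Nat.gcd p q) := by
  intro s
  induction s with
  | zero => intro p q L hs hp0 hpq hL _ _ z hz; exfalso; omega
  | succ s ih =>
    intro p q L hs hp0 hpq hL hp hq
    rcases eq_or_lt_of_le hpq with heq | hlt
    · subst heq
      rw [Nat.gcd_self]
      exact hp
    · have hq'0 : 0 < q - p := by omega
      have hper' : ∀ z, z + (q - p) < L - p → f z = f (z + (q - p)) := by
        intro z hz
        have e1 : f z = f (z + q) := hq z (by omega)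
        have e2 : f (z + (q - p)) = f (z + q) := by
          have := hp (z + (q - p)) (by omega)
          rwa [show z + (q - p) + p = z + q by omega] at this
        rw [e1, ← e2]
      have hperp' : ∀ z, z + p < L - p → f z = f (z + p) := fun z hz => hp z (by omega)
      have hgeq : Nat.gcd p (q - p) = Nat.gcd p q := Nat.gcd_sub_self_right (le_of_lt hlt)
      have hrec : ∀ z, z + Nat.gcd p q < L - p → f z = f (z + Nat.gcd p q) := by
        rcases le_total p (q - p) with hle | hle
        · have := ih p (q - p) (L - p) (by omega) hp0 hle (by omega) hperp' hper'
          rwa [hgeq] at this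
        · have := ih (q - p) p (L - p) (by omega) hq'0 hle (by omega) hper' hperp'
          rwa [Nat.gcd_comm, hgeq] at this
      have hg0 : 0 < Nat.gcd p q := Nat.gcd_pos_of_pos_left q hp0
      have hgle : Nat.gcd p q ≤ q - p :=
        Nat.le_of_dvd (by omega) (Nat.dvd_sub (Nat.gcd_dvd_right p q) (Nat.gcd_dvd_left p q))
      intro z
      induction z using Nat.strong_induction_on with
      | _ z ihz =>
        intro hzL
        rcases Nat.lt_or_ge (z + Nat.gcd p q) (L - p) with hc | hc
        · exact hrec z hc
        · have hzp : p ≤ z := by omega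
          have e1 : f (z - p) = f z := by
            have := hp (z - p) (by omega)
            rwa [Nat.sub_add_cancel hzp] at this
          have e2 : f (z + Nat.gcd p q - p) = f (z + Nat.gcd p q) := by
            have := hp (z + Nat.gcd p q - p) (by omega)
            rwa [show z + Nat.gcd p q - p + p = z + Nat.gcd p q by omega] at this
          have e3 : f (z - p) = f (z - p + Nat.gcd p q) := ihz (z - p) (by omega) (by omega)
          rw [← e1, e3, show z - p + Nat.gcd p q = z + Nat.gcd p q - p by omega, e2]

private lemma fw (f : ℕ → β) (p q L : ℕ) (hp0 : 0 < p) (hq0 : 0 < q) (hL : p + q ≤ L)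
    (hp : ∀ z, z + p < L → f z = f (z + p)) (hq : ∀ z, z + q < L → f z = f (z + q)) :
    ∀ z, z + Nat.gcd p q < L → f z = f (z + Nat.gcd p q) := by
  rcases le_total p q with h | h
  · exact fw_core f q p q L le_rfl hp0 h hL hp hq
  · have := fw_core f p q p L le_rfl hq0 h (by omega) hq hp
    rw [Nat.gcd_comm p q]
    exact this

private def CyInv (f : ℕ → β) (p s : ℕ) : Prop := ∀ x, x < p → f x = f ((x + s) % p)

private lemma cyinv_self (f : ℕ → β) (p : ℕ) : CyInv f p p := by
  intro x hx
  rw [Nat.add_mod_right, Nat.mod_eq_of_lt hx]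

private lemma cyinv_sub (f : ℕ → β) (p : ℕ) (hp : 0 < p) {s t : ℕ} (hts : t ≤ s)
    (hs : CyInv f p s) (ht : CyInv f p t) : CyInv f p (s - t) := by
  intro x hx
  have h1 := hs x hx
  have h2 := ht ((x + (s - t)) % p) (Nat.mod_lt _ hp)
  rw [Nat.mod_add_mod, show x + (s - t) + t = x + s by omega] at h2
  rw [h1, ← h2]

private lemma cyinv_gcd (f : ℕ → β) (p : ℕ) (hp : 0 < p) :
    ∀ (s a b : ℕ), a + b ≤ s → CyInv f p a → CyInv f p b → CyInv f p (Nat.gcd a b) := by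
  intro s
  induction s with
  | zero =>
    intro a b hs ha hb
    obtain ⟨ha0, hb0⟩ : a = 0 ∧ b = 0 := by omega
    subst ha0; subst hb0
    simpa using hb
  | succ s ih =>
    intro a b hs ha hb
    rcases Nat.eq_zero_or_pos a with h0 | ha0
    · subst h0; rw [Nat.gcd_zero_left]; exact hb
    rcases Nat.eq_zero_or_pos b with h0 | hb0
    · subst h0; rw [Nat.gcd_zero_right]; exact ha
    rcases le_total a b with hab | hab
    · rw [← Nat.gcd_sub_self_right hab]
      exact ih a (b - a) (by omega) ha (cyinv_sub f p hp hab hb ha)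
    · rw [← Nat.gcd_sub_self_left hab]
      exact ih (a - b) b (by omega) (cyinv_sub f p hp hab ha hb) hb

private lemma cyinv_tile (f : ℕ → β) (p s : ℕ) (hp : 0 < p) (hs : CyInv f p s) :
    ∀ x, x < p → f x = f (x % Nat.gcd s p) := by
  have hg : CyInv f p (Nat.gcd s p) := cyinv_gcd f p hp (s + p) s p le_rfl hs (cyinv_self f p)
  have hG0 : 0 < Nat.gcd s p := Nat.gcd_pos_of_pos_right s hp
  intro x
  induction x using Nat.strong_induction_on with
  | _ x ih =>
    intro hx
    rcases Nat.lt_or_ge x (Nat.gcd s p) with h | h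
    · rw [Nat.mod_eq_of_lt h]
    · have h1 : f (x - Nat.gcd s p) = f x := by
        have := hg (x - Nat.gcd s p) (by omega)
        have e : (x - Nat.gcd s p + Nat.gcd s p) % p = x := by
          rw [Nat.sub_add_cancel h, Nat.mod_eq_of_lt hx]
        rw [e] at this
        exact this
      rw [← h1, Nat.mod_eq_sub_mod h]
      exact ih (x - Nat.gcd s p) (by omega) (by omega)

private lemma three_sq (f : ℕ → β) (h₁ h₂ h₃ : ℕ) (hp1 : 0 < h₁)
    (o12 : h₁ < h₂) (o23 : h₂ < h₃) (o31 : h₃ ≤ 2 * h₁)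
    (P1 : ∀ z, z + h₁ < 2 * h₁ → f z = f (z + h₁))
    (P2 : ∀ z, z + h₂ < 2 * h₂ → f z = f (z + h₂))
    (P3 : ∀ z, z + h₃ < 2 * h₃ → f z = f (z + h₃)) :
    ∃ g, 0 < g ∧ g ∣ h₁ ∧ g < h₁ ∧ ∀ z, z < h₁ → f z = f (z % g) := by
  set t := h₂ - h₁ with ht
  set d := h₃ - h₂ with hd
  have ht0 : 0 < t := by omega
  have hd0 : 0 < d := by omega
  have htd : t + d ≤ h₁ := by omega
  have S1 : ∀ x, x + t < h₁ → f x = f (x + t) := by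
    intro x hx
    have e1 : f x = f (x + h₂) := P2 x (by omega)
    have e2 : f (x + t) = f (x + t + h₁) := P1 (x + t) (by omega)
    rw [e1, e2]
    congr 1
    omega
  have S2 : ∀ x, x + d < h₂ → f x = f (x + d) := by
    intro x hx
    have e1 : f x = f (x + h₃) := P3 x (by omega)
    have e2 : f (x + d) = f (x + d + h₂) := P2 (x + d) (by omega)
    rw [e1, e2]
    congr 1
    omega
  have hg₁0 : 0 < Nat.gcd t d := Nat.gcd_pos_of_pos_left d ht0
  have hFW : ∀ z, z + Nat.gcd t d < h₁ → f z = f (z + Nat.gcd t d) :=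
    fw f t d h₁ ht0 hd0 htd S1 (fun z hz => S2 z (by omega))
  have T1 : ∀ z, z < h₁ → f z = f (z % Nat.gcd t d) := per_tile f (Nat.gcd t d) h₁ hg₁0 hFW
  have hg₁d : Nat.gcd t d ∣ d := Nat.gcd_dvd_right t d
  have hg₁t : Nat.gcd t d ≤ t := Nat.le_of_dvd ht0 (Nat.gcd_dvd_left t d)
  have S4 : ∀ z, z < h₂ → f z = f (z % Nat.gcd t d) := by
    intro z
    induction z using Nat.strong_induction_on with
    | _ z ih =>
      intro hz
      rcases Nat.lt_or_ge z h₁ with h | h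
      · exact T1 z h
      · have e1 : f (z - d) = f z := by
          have := S2 (z - d) (by omega)
          rwa [Nat.sub_add_cancel (by omega : d ≤ z)] at this
        have e2 : f (z - d) = f ((z - d) % Nat.gcd t d) := ih (z - d) (by omega) (by omega)
        have e3 : z % Nat.gcd t d = (z - d) % Nat.gcd t d := by
          obtain ⟨k, hk⟩ := hg₁d
          conv_lhs => rw [show z = (z - d) + k * Nat.gcd t d by rw [mul_comm, ← hk]; omega]
          rw [Nat.add_mul_mod_self_right]
        rw [← e1, e2, e3]
  have S5 : CyInv f (Nat.gcd t d) h₁ := by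
    intro a ha
    have e1 : f a = f (a + h₁) := P1 a (by omega)
    have e2 : f (a + h₁) = f ((a + h₁) % Nat.gcd t d) := S4 (a + h₁) (by omega)
    rw [e1, e2]
  have hrot := cyinv_tile f (Nat.gcd t d) h₁ hg₁0 S5
  refine ⟨Nat.gcd h₁ (Nat.gcd t d), Nat.gcd_pos_of_pos_left _ hp1,
    Nat.gcd_dvd_left _ _, ?_, ?_⟩
  · have hle : Nat.gcd h₁ (Nat.gcd t d) ≤ Nat.gcd t d := Nat.gcd_le_right _ hg₁0
    omega
  · intro z hz
    rw [T1 z hz, hrot (z % Nat.gcd t d) (Nat.mod_lt z hg₁0)]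
    congr 1
    exact Nat.mod_mod_of_dvd z (Nat.gcd_dvd_right h₁ (Nat.gcd t d))


section TwoD
variable {β : Type*}

private lemma content_point {B B' : ℕ → ℕ → β} {i j i' j' H W : ℕ}
    (h : content B i j H W = content B' i' j' H W) :
    ∀ x, x < H → ∀ y, y < W → B (i + x) (j + y) = B' (i' + x) (j' + y) := by
  intro x hx y hy
  have h2 := congrFun (congrFun (congrArg (fun c => c.2.2) h) x) y
  simp only [content] at h2
  rw [if_pos ⟨hx, hy⟩, if_pos ⟨hx, hy⟩] at h2
  exact Option.some.inj h2

private lemma content_ext {B B' : ℕ → ℕ → β} {i j i' j' H W : ℕ}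
    (h : ∀ x, x < H → ∀ y, y < W → B (i + x) (j + y) = B' (i' + x) (j' + y)) :
    content B i j H W = content B' i' j' H W := by
  unfold content
  refine Prod.ext rfl (Prod.ext rfl ?_)
  funext x y
  show (if x < H ∧ y < W then some (B (i + x) (j + y)) else none)
      = (if x < H ∧ y < W then some (B' (i' + x) (j' + y)) else none)
  by_cases hc : x < H ∧ y < W
  · rw [if_pos hc, if_pos hc, h x hc.1 y hc.2]
  · rw [if_neg hc, if_neg hc]

private lemma occ_eq' {B : ℕ → ℕ → β} {i j h w Wd : ℕ}
    (occ : ∀ x, x < 2 * h → ∀ y, y < Wd → B (i + x) (j + y) = B (i + x % h) (j + y % w))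
    {x x' y y' : ℕ} (hx : x < 2 * h) (hx' : x' < 2 * h) (hy : y < Wd) (hy' : y' < Wd)
    (hxm : x % h = x' % h) (hym : y % w = y' % w) :
    B (i + x) (j + y) = B (i + x') (j + y') := by
  rw [occ x hx y hy, occ x' hx' y' hy', hxm, hym]

private lemma mod_helper {w Wk : ℕ} (hw : 0 < w) (hdv : w ∣ Wk) (hge : w ≤ Wk) (y : ℕ) :
    (Wk - w + y) % w = y % w := by
  obtain ⟨k, hk⟩ := hdv
  have hk1 : 1 ≤ k := by
    rcases Nat.eq_zero_or_pos k with h | h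
    · subst h; simp at hk; omega
    · exact h
  have e : Wk - w + y = w * (k - 1) + y := by
    rw [mul_comm w (k - 1), Nat.sub_one_mul, mul_comm k w]
    omega
  rw [e, Nat.mul_add_mod]

/-- The set of contents of "horizontal-power" thin quartics `W^{2,2b}`, `b ≥ 2`. -/
private def Horiz (B : ℕ → ℕ → β) (n : ℕ) : Set (ℕ × ℕ × (ℕ → ℕ → Option β)) :=
  {c | ∃ i j h w b, 2 ≤ b ∧ 0 < h ∧ 0 < w ∧ i + 2 * h ≤ n ∧ j + 2 * b * w ≤ n ∧
    OccPow B i j h w 2 (2 * b) ∧ PrimitiveA (fun x y => B (i + x) (j + y)) h w ∧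
    c = content B i j (2 * h) (2 * b * w)}

private def OccI (B : ℕ → ℕ → β) (n : ℕ) (c : ℕ × ℕ × (ℕ → ℕ → Option β)) : Set ℕ :=
  {i | ∃ j, i + c.1 ≤ n ∧ j + c.2.1 ≤ n ∧ content B i j c.1 c.2.1 = c}

private noncomputable def iC (B : ℕ → ℕ → β) (n : ℕ) (c : ℕ × ℕ × (ℕ → ℕ → Option β)) : ℕ :=
  sInf (OccI B n c)

private def OccJ (B : ℕ → ℕ → β) (n : ℕ) (c : ℕ × ℕ × (ℕ → ℕ → Option β)) : Set ℕ :=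
  {j | iC B n c + c.1 ≤ n ∧ j + c.2.1 ≤ n ∧ content B (iC B n c) j c.1 c.2.1 = c}

private noncomputable def jC (B : ℕ → ℕ → β) (n : ℕ) (c : ℕ × ℕ × (ℕ → ℕ → Option β)) : ℕ :=
  sInf (OccJ B n c)

private def hC (c : ℕ × ℕ × (ℕ → ℕ → Option β)) : ℕ := c.1 / 2

private def wSet (B : ℕ → ℕ → β) (n : ℕ) (c : ℕ × ℕ × (ℕ → ℕ → Option β)) : Set ℕ :=
  {w | 0 < w ∧ ∃ b, 2 ≤ b ∧ 2 * b * w = c.2.1 ∧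
    OccPow B (iC B n c) (jC B n c) (hC c) w 2 (2 * b) ∧
    PrimitiveA (fun x y => B (iC B n c + x) (jC B n c + y)) (hC c) w}

private noncomputable def wC (B : ℕ → ℕ → β) (n : ℕ) (c : ℕ × ℕ × (ℕ → ℕ → Option β)) : ℕ :=
  sInf (wSet B n c)

private noncomputable def eC (B : ℕ → ℕ → β) (n : ℕ) (c : ℕ × ℕ × (ℕ → ℕ → Option β)) : ℕ :=
  jC B n c + c.2.1 - 1

private lemma canon {B : ℕ → ℕ → β} {n : ℕ} {c : ℕ × ℕ × (ℕ → ℕ → Option β)}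
    (hc : c ∈ Horiz B n) :
    0 < hC c ∧ c.1 = 2 * hC c ∧
    0 < wC B n c ∧ (2 * wC B n c) ∣ c.2.1 ∧ 4 * wC B n c ≤ c.2.1 ∧
    iC B n c + c.1 ≤ n ∧ jC B n c + c.2.1 ≤ n ∧
    content B (iC B n c) (jC B n c) c.1 c.2.1 = c ∧
    (∀ x, x < c.1 → ∀ y, y < c.2.1 →
      B (iC B n c + x) (jC B n c + y) = B (iC B n c + x % hC c) (jC B n c + y % wC B n c)) ∧
    PrimitiveA (fun x y => B (iC B n c + x) (jC B n c + y)) (hC c) (wC B n c) := by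
  obtain ⟨i₀, j₀, h₀, w₀, b₀, hb₀, hh₀, hw₀, hin, hjn, hocc, hprim, hcc⟩ := hc
  have hc1 : c.1 = 2 * h₀ := by rw [hcc]; rfl
  have hc2 : c.2.1 = 2 * b₀ * w₀ := by rw [hcc]; rfl
  have hHc : hC c = h₀ := by unfold hC; omega
  have hiI : i₀ ∈ OccI B n c := ⟨j₀, by omega, by omega, by rw [hc1, hc2]; exact hcc.symm⟩
  obtain ⟨j₁, hj₁1, hj₁2, hj₁3⟩ := Nat.sInf_mem (⟨i₀, hiI⟩ : (OccI B n c).Nonempty)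
  have hjJ : j₁ ∈ OccJ B n c := ⟨hj₁1, hj₁2, hj₁3⟩
  obtain ⟨hn1, hn2', hcan'⟩ := Nat.sInf_mem (⟨j₁, hjJ⟩ : (OccJ B n c).Nonempty)
  have hn2 : jC B n c + c.2.1 ≤ n := hn2'
  have hcan : content B (iC B n c) (jC B n c) c.1 c.2.1 = c := hcan'
  have hpt : ∀ x, x < c.1 → ∀ y, y < c.2.1 →
      B (iC B n c + x) (jC B n c + y) = B (i₀ + x) (j₀ + y) := by
    have he : content B (iC B n c) (jC B n c) c.1 c.2.1 = content B i₀ j₀ c.1 c.2.1 := by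
      rw [hcan]
      rw [hc1, hc2]
      exact hcc
    exact content_point he
  have hw₀le : w₀ ≤ 2 * b₀ * w₀ := Nat.le_mul_of_pos_left w₀ (by omega)
  have hh₀le : h₀ ≤ 2 * h₀ := by omega
  have hwS : w₀ ∈ wSet B n c := by
    refine ⟨hw₀, b₀, hb₀, hc2.symm, ?_, ?_⟩
    · rw [hHc]
      intro x hx y hy
      have hx1 : x < c.1 := by omega
      have hy1 : y < c.2.1 := by rw [hc2]; exact hy
      have hx2 : x % h₀ < c.1 := by
        have := Nat.mod_lt x hh₀
        omega
      have hy2 : y % w₀ < c.2.1 := by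
        rw [hc2]
        exact lt_of_lt_of_le (Nat.mod_lt y hw₀) hw₀le
      rw [hpt x hx1 y hy1, hpt (x % h₀) hx2 (y % w₀) hy2]
      exact hocc x hx y hy
    · obtain ⟨_, _, hP⟩ := hprim
      rw [hHc]
      refine ⟨hh₀, hw₀, ?_⟩
      intro p q hp hq hpd hqd htile
      apply hP p q hp hq hpd hqd
      intro x hx y hy
      have hx1 : x < c.1 := by omega
      have hy1 : y < c.2.1 := by
        rw [hc2]
        omega
      have hx2 : x % p < c.1 := by
        have h3 := Nat.mod_le x p
        omega
      have hy2 : y % q < c.2.1 := by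
        have h3 := Nat.mod_le y q
        rw [hc2]
        omega
      have ht := htile x hx y hy
      simp only at ht
      rw [hpt x hx1 y hy1, hpt (x % p) hx2 (y % q) hy2] at ht
      exact ht
  have hwc : wC B n c ∈ wSet B n c := Nat.sInf_mem ⟨w₀, hwS⟩
  obtain ⟨hw0, b, hb2, hbw, hoccC, hprimC⟩ := hwc
  have h4w : 4 * wC B n c ≤ c.2.1 := by
    rw [← hbw]
    calc 4 * wC B n c = 2 * 2 * wC B n c := by ring
    _ ≤ 2 * b * wC B n c := Nat.mul_le_mul_right _ (by omega)
  refine ⟨by omega, by omega, hw0, ⟨b, by rw [← hbw]; ring⟩, h4w, hn1, hn2, hcan, ?_, hprimC⟩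
  intro x hx y hy
  have hx' : x < 2 * hC c := by omega
  have hy' : y < 2 * b * wC B n c := by rw [hbw]; exact hy
  exact hoccC x hx' y hy'

private lemma K1 {B : ℕ → ℕ → β} {i E j₁ h₁ w₁ W₁ j₂ h₂ w₂ W₂ : ℕ}
    (hh₁ : 0 < h₁) (hw₁ : 0 < w₁) (hW₁ : 4 * w₁ ≤ W₁) (hE₁ : j₁ + W₁ = E)
    (occ₁ : ∀ x, x < 2 * h₁ → ∀ y, y < W₁ →
      B (i + x) (j₁ + y) = B (i + x % h₁) (j₁ + y % w₁))
    (hh₂ : 0 < h₂) (hw₂ : 0 < w₂) (hW₂ : 4 * w₂ ≤ W₂) (hdv₂ : w₂ ∣ W₂) (hE₂ : j₂ + W₂ = E)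
    (occ₂ : ∀ x, x < 2 * h₂ → ∀ y, y < W₂ →
      B (i + x) (j₂ + y) = B (i + x % h₂) (j₂ + y % w₂))
    (prim₂ : PrimitiveA (fun x y => B (i + x) (j₂ + y)) h₂ w₂)
    (hcmp : h₂ ≤ 2 * h₁) (hlt : w₁ < w₂) (hle : w₂ ≤ 3 * w₁) : False := by
  set m := min W₁ W₂ with hm
  have hm1 : m ≤ W₁ := min_le_left _ _
  have hm2 : m ≤ W₂ := min_le_right _ _
  have hmw : w₁ + w₂ ≤ m := le_min (by omega) (by omega)
  set g := Nat.gcd w₁ w₂ with hg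
  have hg0 : 0 < g := Nat.gcd_pos_of_pos_left w₂ hw₁
  have hgle : g ≤ w₁ := Nat.gcd_le_left w₂ hw₁
  have key : ∀ x, x < h₂ → ∀ y, y < w₂ →
      B (i + x) (j₂ + y) = B (i + x) (j₂ + y % g) := by
    intro x hx
    have hx₁ : x < 2 * h₁ := by omega
    have hx₂ : x < 2 * h₂ := by omega
    have hper₁ : ∀ z, z + w₁ < m → (fun z => B (i + x) (E - m + z)) z
        = (fun z => B (i + x) (E - m + z)) (z + w₁) := by
      intro z hz
      show B (i + x) (E - m + z) = B (i + x) (E - m + (z + w₁))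
      rw [show E - m + z = j₁ + (W₁ - m + z) by omega,
        show E - m + (z + w₁) = j₁ + (W₁ - m + z + w₁) by omega]
      exact occ_eq' occ₁ hx₁ hx₁ (by omega) (by omega) rfl (Nat.add_mod_right _ _).symm
    have hper₂ : ∀ z, z + w₂ < m → (fun z => B (i + x) (E - m + z)) z
        = (fun z => B (i + x) (E - m + z)) (z + w₂) := by
      intro z hz
      show B (i + x) (E - m + z) = B (i + x) (E - m + (z + w₂))
      rw [show E - m + z = j₂ + (W₂ - m + z) by omega,
        show E - m + (z + w₂) = j₂ + (W₂ - m + z + w₂) by omega]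
      exact occ_eq' occ₂ hx₂ hx₂ (by omega) (by omega) rfl (Nat.add_mod_right _ _).symm
    have hFW := fw (fun z => B (i + x) (E - m + z)) w₁ w₂ m hw₁ hw₂ hmw hper₁ hper₂
    have hT0 := per_tile (fun z => B (i + x) (E - m + z)) g m hg0 hFW
    have hT : ∀ z, z < m → B (i + x) (E - m + z) = B (i + x) (E - m + z % g) :=
      fun z hz => hT0 z hz
    intro y hy
    have tr : ∀ y', y' < w₂ → B (i + x) (j₂ + y') = B (i + x) (E - m + (m - w₂ + y')) := by
      intro y' hy'
      rw [show E - m + (m - w₂ + y') = j₂ + (W₂ - w₂ + y') by omega]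
      exact occ_eq' occ₂ hx₂ hx₂ (by omega) (by omega) rfl
        (mod_helper hw₂ hdv₂ (by omega) y').symm
    have hymod : y % g < w₂ := lt_of_lt_of_le (Nat.mod_lt y hg0) (by omega)
    rw [tr y hy, tr (y % g) hymod]
    rw [hT (m - w₂ + y) (by omega), hT (m - w₂ + y % g) (by omega)]
    congr 2
    rw [Nat.add_mod (m - w₂) y g, Nat.add_mod (m - w₂) (y % g) g,
      Nat.mod_mod_of_dvd y (dvd_refl g)]
  obtain ⟨_, _, hP⟩ := prim₂
  have hfin := hP h₂ g hh₂ hg0 dvd_rfl (Nat.gcd_dvd_right w₁ w₂) ?_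
  · omega
  · intro x hx y hy
    show B (i + x) (j₂ + y) = B (i + x % h₂) (j₂ + y % g)
    rw [Nat.mod_eq_of_lt hx]
    exact key x hx y hy

private lemma K2 {B : ℕ → ℕ → β} {i E w j₁ h₁ W₁ j₂ h₂ W₂ j₃ h₃ W₃ : ℕ}
    (hw : 0 < w) (hh₁ : 0 < h₁)
    (o12 : h₁ < h₂) (o23 : h₂ < h₃) (o31 : h₃ ≤ 2 * h₁)
    (hW₁ : w ≤ W₁) (hdv₁ : w ∣ W₁) (hE₁ : j₁ + W₁ = E)
    (occ₁ : ∀ x, x < 2 * h₁ → ∀ y, y < W₁ →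
      B (i + x) (j₁ + y) = B (i + x % h₁) (j₁ + y % w))
    (hW₂ : w ≤ W₂) (hdv₂ : w ∣ W₂) (hE₂ : j₂ + W₂ = E)
    (occ₂ : ∀ x, x < 2 * h₂ → ∀ y, y < W₂ →
      B (i + x) (j₂ + y) = B (i + x % h₂) (j₂ + y % w))
    (hW₃ : w ≤ W₃) (hdv₃ : w ∣ W₃) (hE₃ : j₃ + W₃ = E)
    (occ₃ : ∀ x, x < 2 * h₃ → ∀ y, y < W₃ →
      B (i + x) (j₃ + y) = B (i + x % h₃) (j₃ + y % w))
    (prim₁ : PrimitiveA (fun x y => B (i + x) (j₁ + y)) h₁ w) : False := by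
  set f : ℕ → ℕ → Option β := fun z y => if y < w then some (B (i + z) (E - w + y)) else none
    with hf
  have P : ∀ (jk hk Wk : ℕ), 0 < hk → w ≤ Wk → w ∣ Wk → jk + Wk = E →
      (∀ x, x < 2 * hk → ∀ y, y < Wk →
        B (i + x) (jk + y) = B (i + x % hk) (jk + y % w)) →
      ∀ z, z + hk < 2 * hk → f z = f (z + hk) := by
    intro jk hk Wk hhk hWk hdvk hEk occk z hz
    funext y
    by_cases hy : y < w
    · simp only [hf, if_pos hy]
      congr 1
      rw [show E - w + y = jk + (Wk - w + y) by omega]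
      exact occ_eq' occk (by omega) (by omega) (by omega) (by omega)
        (Nat.add_mod_right z hk).symm rfl
    · simp only [hf, if_neg hy]
  obtain ⟨g, hg0, hgdvd, hglt, htile⟩ := three_sq f h₁ h₂ h₃ hh₁ o12 o23 o31
    (P j₁ h₁ W₁ hh₁ hW₁ hdv₁ hE₁ occ₁)
    (P j₂ h₂ W₂ (by omega) hW₂ hdv₂ hE₂ occ₂)
    (P j₃ h₃ W₃ (by omega) hW₃ hdv₃ hE₃ occ₃)
  have hpt : ∀ z, z < h₁ → ∀ y, y < w →
      B (i + z) (E - w + y) = B (i + z % g) (E - w + y) := by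
    intro z hz y hy
    have h2 := congrFun (htile z hz) y
    simp only [hf, if_pos hy] at h2
    exact Option.some.inj h2
  have tr : ∀ x, x < 2 * h₁ → ∀ y, y < w →
      B (i + x) (j₁ + y) = B (i + x) (E - w + y) := by
    intro x hx y hy
    rw [show E - w + y = j₁ + (W₁ - w + y) by omega]
    exact occ_eq' occ₁ hx hx (by omega) (by omega) rfl (mod_helper hw hdv₁ hW₁ y).symm
  obtain ⟨_, _, hP⟩ := prim₁
  have hfin := hP g w hg0 hw hgdvd dvd_rfl ?_
  · omega
  · intro x hx y hy
    show B (i + x) (j₁ + y) = B (i + x % g) (j₁ + y % w)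
    rw [Nat.mod_eq_of_lt hy]
    have hxg : x % g < h₁ := by
      have := Nat.mod_lt x hg0
      omega
    rw [tr x (by omega) y hy, hpt x hx y hy, ← tr (x % g) (by omega) y hy]

private def HS (B : ℕ → ℕ → β) (n i e κ lam : ℕ) : Set ℕ :=
  {h' | ∃ c', c' ∈ Horiz B n ∧ iC B n c' = i ∧ eC B n c' = e ∧ Nat.log 2 (hC c') = κ ∧
    Nat.log 2 (wC B n c') = lam ∧ hC c' = h'}

private noncomputable def rC (B : ℕ → ℕ → β) (n : ℕ) (c : ℕ × ℕ × (ℕ → ℕ → Option β)) : ℕ :=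
  if hC c = sInf (HS B n (iC B n c) (eC B n c) (Nat.log 2 (hC c)) (Nat.log 2 (wC B n c)))
  then 0 else 1

private lemma dyadic_le {a b : ℕ} (ha : 0 < a) (hb : 0 < b)
    (h : Nat.log 2 a = Nat.log 2 b) : b ≤ 2 * a := by
  have p1 : 2 ^ Nat.log 2 a ≤ a := Nat.pow_log_le_self 2 (by omega)
  have p2 : b < 2 ^ (Nat.log 2 b + 1) := Nat.lt_pow_succ_log_self (by norm_num) b
  have p3 : (2:ℕ) ^ (Nat.log 2 b + 1) = 2 * 2 ^ Nat.log 2 b := by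
    rw [pow_succ]; ring
  rw [h] at p1
  omega

private lemma samew_lt {B : ℕ → ℕ → β} {n : ℕ} {c c' : ℕ × ℕ × (ℕ → ℕ → Option β)}
    (hc : c ∈ Horiz B n) (hc' : c' ∈ Horiz B n)
    (hi : iC B n c' = iC B n c) (he : eC B n c' = eC B n c)
    (hκ : Nat.log 2 (hC c') = Nat.log 2 (hC c))
    (hlm : Nat.log 2 (wC B n c') = Nat.log 2 (wC B n c))
    (hlt : wC B n c < wC B n c') : False := by
  obtain ⟨hh0, hdim, hw0, hdv2, h4w, hinb, hjnb, hcan, hocc, hprim⟩ := canon hc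
  obtain ⟨hh0', hdim', hw0', hdv2', h4w', hinb', hjnb', hcan', hocc', hprim'⟩ := canon hc'
  rw [hi] at hocc' hprim'
  have hE : jC B n c + c.2.1 = eC B n c + 1 := by
    unfold eC; omega
  have hE' : jC B n c' + c'.2.1 = eC B n c + 1 := by
    rw [← he]; unfold eC; omega
  have hcmp : hC c' ≤ 2 * hC c := dyadic_le hh0 hh0' hκ.symm
  have hle3 : wC B n c' ≤ 3 * wC B n c := by
    have := dyadic_le hw0 hw0' hlm.symm
    omega
  exact K1 (B := B) (i := iC B n c) (E := eC B n c + 1)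
    hh0 hw0 (by omega) hE
    (fun x hx y hy => hocc x (by omega) y hy)
    hh0' hw0' (by omega)
    (dvd_trans ⟨2, by ring⟩ hdv2') hE'
    (fun x hx y hy => hocc' x (by omega) y hy)
    hprim' hcmp hlt hle3

private lemma samew {B : ℕ → ℕ → β} {n : ℕ} {c c' : ℕ × ℕ × (ℕ → ℕ → Option β)}
    (hc : c ∈ Horiz B n) (hc' : c' ∈ Horiz B n)
    (hi : iC B n c' = iC B n c) (he : eC B n c' = eC B n c)
    (hκ : Nat.log 2 (hC c') = Nat.log 2 (hC c))
    (hlm : Nat.log 2 (wC B n c') = Nat.log 2 (wC B n c)) :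
    wC B n c' = wC B n c := by
  rcases lt_trichotomy (wC B n c') (wC B n c) with h | h | h
  · exact absurd (samew_lt hc' hc hi.symm he.symm hκ.symm hlm.symm h) id
  · exact h
  · exact absurd (samew_lt hc hc' hi he hκ hlm h) id

private lemma hs_kill {B : ℕ → ℕ → β} {n i e κ lam : ℕ} {h₁ h₂ h₃ : ℕ}
    (m1 : h₁ ∈ HS B n i e κ lam) (m2 : h₂ ∈ HS B n i e κ lam)
    (m3 : h₃ ∈ HS B n i e κ lam) (o12 : h₁ < h₂) (o23 : h₂ < h₃) : False := by
  obtain ⟨c₁, hc₁, hi₁, he₁, hκ₁, hlm₁, hh₁⟩ := m1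
  obtain ⟨c₂, hc₂, hi₂, he₂, hκ₂, hlm₂, hh₂⟩ := m2
  obtain ⟨c₃, hc₃, hi₃, he₃, hκ₃, hlm₃, hh₃⟩ := m3
  obtain ⟨ph0, pdim, pw0, pdv2, p4w, pinb, pjnb, pcan, pocc, pprim⟩ := canon hc₁
  obtain ⟨qh0, qdim, qw0, qdv2, q4w, qinb, qjnb, qcan, qocc, qprim⟩ := canon hc₂
  obtain ⟨rh0, rdim, rw0, rdv2, r4w, rinb, rjnb, rcan, rocc, rprim⟩ := canon hc₃
  have hw21 : wC B n c₂ = wC B n c₁ :=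
    samew hc₁ hc₂ (by rw [hi₂, hi₁]) (by rw [he₂, he₁]) (by rw [hκ₂, hκ₁]) (by rw [hlm₂, hlm₁])
  have hw31 : wC B n c₃ = wC B n c₁ :=
    samew hc₁ hc₃ (by rw [hi₃, hi₁]) (by rw [he₃, he₁]) (by rw [hκ₃, hκ₁]) (by rw [hlm₃, hlm₁])
  have o31 : h₃ ≤ 2 * h₁ := by
    have := dyadic_le (a := hC c₁) (b := hC c₃) ph0 rh0 (by rw [hκ₃, hκ₁])
    omega
  have hE₁ : jC B n c₁ + c₁.2.1 = e + 1 := by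
    rw [← he₁]; unfold eC; omega
  have hE₂ : jC B n c₂ + c₂.2.1 = e + 1 := by
    rw [← he₂]; unfold eC; omega
  have hE₃ : jC B n c₃ + c₃.2.1 = e + 1 := by
    rw [← he₃]; unfold eC; omega
  rw [hi₁] at pocc pprim
  rw [hi₂] at qocc
  rw [hi₃] at rocc
  rw [hw21] at qocc qdv2 q4w
  rw [hw31] at rocc rdv2 r4w
  rw [hh₁] at pocc
  rw [hh₂] at qocc
  rw [hh₃] at rocc
  have hwdvd : wC B n c₁ ∣ (2 * wC B n c₁) := ⟨2, by ring⟩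
  exact K2 (B := B) (i := i) (E := e + 1) (w := wC B n c₁)
    pw0 (by omega : 0 < h₁) o12 o23 o31
    (by omega) (dvd_trans hwdvd pdv2) hE₁
    (fun x hx y hy => pocc x (by rw [pdim, hh₁]; omega) y hy)
    (by omega) (dvd_trans hwdvd qdv2) hE₂
    (fun x hx y hy => qocc x (by rw [qdim, hh₂]; omega) y hy)
    (by omega) (dvd_trans hwdvd rdv2) hE₃
    (fun x hx y hy => rocc x (by rw [rdim, hh₃]; omega) y hy)
    (by rw [← hh₁]; exact pprim)

private lemma stepj {B : ℕ → ℕ → β} {n : ℕ} {c c' : ℕ × ℕ × (ℕ → ℕ → Option β)}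
    (hc : c ∈ Horiz B n) (hc' : c' ∈ Horiz B n)
    (hi : iC B n c' = iC B n c) (he : eC B n c' = eC B n c)
    (hh : hC c' = hC c) (hw : wC B n c' = wC B n c)
    (hjlt : jC B n c < jC B n c') : False := by
  obtain ⟨hh0, hdim, hw0, hdv2, h4w, hinb, hjnb, hcan, hocc, hprim⟩ := canon hc
  obtain ⟨hh0', hdim', hw0', hdv2', h4w', hinb', hjnb', hcan', hocc', hprim'⟩ := canon hc'
  set i := iC B n c with hidef
  set j := jC B n c with hjdef
  set j' := jC B n c' with hjdef'
  set w := wC B n c with hwdef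
  set W := c.2.1 with hWdef
  set W' := c'.2.1 with hWdef'
  have hE : j + W = eC B n c + 1 := by
    rw [hjdef, hWdef]; unfold eC; omega
  have hE' : j' + W' = eC B n c + 1 := by
    rw [← he, hjdef', hWdef']; unfold eC; omega
  have hWlt : W' < W := by omega
  have hdvd : (2 * w) ∣ (W - W') := by
    apply Nat.dvd_sub hdv2
    rw [← hw]
    exact hdv2'
  have hge : 2 * w ≤ j' - j := by
    have := Nat.le_of_dvd (by omega) hdvd
    omega
  have hdimeq : c'.1 = c.1 := by rw [hdim, hdim', hh]
  -- the content c' also occurs at (i, j' - w)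
  have hocc2 : content B i (j' - w) c'.1 c'.2.1 = content B i j' c'.1 c'.2.1 := by
    apply content_ext
    intro x hx y hy
    have hx1 : x < c.1 := by rw [← hdimeq]; exact hx
    have e1 : j' - w + y = j + (j' - j - w + y) := by omega
    have e2 : j' + y = j + (j' - j + y) := by omega
    rw [e1, e2]
    have hb1 : j' - j - w + y < W := by omega
    have hb2 : j' - j + y < W := by omega
    rw [hocc x hx1 (j' - j - w + y) hb1, hocc x hx1 (j' - j + y) hb2]
    congr 2
    rw [show j' - j + y = (j' - j - w + y) + w by omega, Nat.add_mod_right]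
  have hmem : (j' - w) ∈ OccJ B n c' := by
    refine ⟨hinb', by omega, ?_⟩
    rw [hi]
    rw [hocc2]
    rw [← hi]
    exact hcan'
  have hle := Nat.sInf_le hmem
  have hj'eq : j' = sInf (OccJ B n c') := rfl
  omega

private lemma horiz_card (B : ℕ → ℕ → β) (n : ℕ) :
    (Horiz B n).Finite ∧
    (Horiz B n).ncard ≤ 2 * (n * n * (Nat.log 2 n + 1) * (Nat.log 2 n + 1)) := by
  classical
  set L := Nat.log 2 n + 1 with hL
  set T : Finset (ℕ × ℕ × ℕ × ℕ × ℕ) :=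
    Finset.range n ×ˢ Finset.range n ×ˢ Finset.range L ×ˢ Finset.range L ×ˢ Finset.range 2
    with hT
  set Ψ : (ℕ × ℕ × (ℕ → ℕ → Option β)) → ℕ × ℕ × ℕ × ℕ × ℕ :=
    fun c => (iC B n c, eC B n c, Nat.log 2 (hC c), Nat.log 2 (wC B n c), rC B n c) with hΨ
  have hmaps : ∀ c ∈ Horiz B n, Ψ c ∈ (↑T : Set (ℕ × ℕ × ℕ × ℕ × ℕ)) := by
    intro c hc
    obtain ⟨hh0, hdim, hw0, hdv2, h4w, hinb, hjnb, hcan, hocc, hprim⟩ := canon hc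
    have heC : eC B n c = jC B n c + c.2.1 - 1 := rfl
    have hhn : hC c ≤ n := by omega
    have hwn : wC B n c ≤ n := by omega
    simp only [hΨ, hT, Finset.mem_coe, Finset.mem_product, Finset.mem_range]
    refine ⟨by omega, by omega, ?_, ?_, ?_⟩
    · have := Nat.log_mono_right (b := 2) hhn
      omega
    · have := Nat.log_mono_right (b := 2) hwn
      omega
    · unfold rC
      split_ifs <;> omega
  have hinj : Set.InjOn Ψ (Horiz B n) := by
    intro c hc c' hc' heq
    simp only [hΨ, Prod.mk.injEq] at heq
    obtain ⟨hi, he, hκ, hlm, hr⟩ := heq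
    have hw : wC B n c' = wC B n c := samew hc hc' hi.symm he.symm hκ.symm hlm.symm
    have hmem : hC c ∈ HS B n (iC B n c) (eC B n c) (Nat.log 2 (hC c))
        (Nat.log 2 (wC B n c)) := ⟨c, hc, rfl, rfl, rfl, rfl, rfl⟩
    have hmem' : hC c' ∈ HS B n (iC B n c) (eC B n c) (Nat.log 2 (hC c))
        (Nat.log 2 (wC B n c)) := ⟨c', hc', hi.symm, he.symm, hκ.symm, hlm.symm, rfl⟩
    set S := HS B n (iC B n c) (eC B n c) (Nat.log 2 (hC c)) (Nat.log 2 (wC B n c)) with hS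
    have hsinf := Nat.sInf_mem (⟨_, hmem⟩ : S.Nonempty)
    have hrc : rC B n c = if hC c = sInf S then 0 else 1 := rfl
    have hrc' : rC B n c' = if hC c' = sInf S then 0 else 1 := by
      unfold rC
      rw [← hi, ← he, ← hκ, ← hlm]
    have hhh : hC c' = hC c := by
      by_cases h1 : hC c = sInf S
      · by_cases h2 : hC c' = sInf S
        · rw [h1, h2]
        · rw [hrc, hrc', if_pos h1, if_neg h2] at hr
          omega
      · by_cases h2 : hC c' = sInf S
        · rw [hrc, hrc', if_neg h1, if_pos h2] at hr
          omega
        · by_contra hne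
          have hmin := Nat.sInf_le hmem
          have hmin' := Nat.sInf_le hmem'
          rcases lt_trichotomy (hC c) (hC c') with h3 | h3 | h3
          · exact hs_kill hsinf hmem hmem' (by omega) h3
          · exact hne h3.symm
          · exact hs_kill hsinf hmem' hmem (by omega) h3
    rcases lt_trichotomy (jC B n c) (jC B n c') with h3 | h3 | h3
    · exact absurd (stepj hc hc' hi.symm he.symm hhh hw h3) id
    · obtain ⟨hh0, hdim, hw0, _, h4w, _, _, hcan, _, _⟩ := canon hc
      obtain ⟨hh0', hdim', hw0', _, h4w', _, _, hcan', _, _⟩ := canon hc'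
      have hdimeq : c.1 = c'.1 := by rw [hdim, hdim', hhh]
      have hWeq : c.2.1 = c'.2.1 := by
        have e1 : eC B n c = jC B n c + c.2.1 - 1 := rfl
        have e2 : eC B n c' = jC B n c' + c'.2.1 - 1 := rfl
        omega
      rw [← hcan, ← hcan', hi, h3, hdimeq, hWeq]
    · exact absurd (stepj hc' hc hi he hhh.symm hw.symm h3) id
  have hfin : (Horiz B n).Finite := Set.Finite.of_finite_image
    (Set.Finite.subset T.finite_toSet (Set.image_subset_iff.mpr hmaps)) hinj
  refine ⟨hfin, ?_⟩
  have hcard := Set.ncard_le_ncard_of_injOn Ψ hmaps hinj T.finite_toSet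
  rw [Set.ncard_coe_finset] at hcard
  have hTcard : T.card = 2 * (n * n * L * L) := by
    rw [hT]
    simp only [Finset.card_product, Finset.card_range]
    ring
  omega

private def tauC (c : ℕ × ℕ × (ℕ → ℕ → Option β)) : ℕ × ℕ × (ℕ → ℕ → Option β) :=
  (c.2.1, c.1, fun x y => c.2.2 y x)

private lemma tauC_inj : Function.Injective (tauC (β := β)) := by
  intro a b h
  obtain ⟨a1, a2, a3⟩ := a
  obtain ⟨b1, b2, b3⟩ := b
  simp only [tauC, Prod.mk.injEq] at h
  obtain ⟨h1, h2, h3⟩ := h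
  refine Prod.ext h2 (Prod.ext h1 ?_)
  show a3 = b3
  funext x y
  exact congrFun (congrFun h3 y) x

private lemma thin_subset (A : ℕ → ℕ → β) (n : ℕ) :
    ThinQuarticContents A n ⊆ Horiz A n ∪ (tauC ⁻¹' (Horiz (fun x y => A y x) n)) := by
  intro c hc
  obtain ⟨i, j, h, w, a, b, ha0, hb0, hab, hnab, hprim, hin, hjn, hocc, hceq⟩ := hc
  rcases hab with ha | hb
  · left
    subst ha
    have hb2 : 2 ≤ b := by
      rcases Nat.lt_or_ge b 2 with h' | h'
      · have hb1 : b = 1 := by omega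
        exact absurd ⟨rfl, hb1⟩ hnab
      · exact h'
    refine ⟨i, j, h, w, b, hb2, hprim.1, hprim.2.1, by omega, by omega, ?_, hprim, ?_⟩
    · intro x hx y hy
      exact hocc x (by omega) y hy
    · rw [show 2 * h = 2 * 1 * h by ring]
      exact hceq
  · right
    subst hb
    have ha2 : 2 ≤ a := by
      rcases Nat.lt_or_ge a 2 with h' | h'
      · have ha1 : a = 1 := by omega
        exact absurd ⟨ha1, rfl⟩ hnab
      · exact h'
    show tauC c ∈ Horiz (fun x y => A y x) n
    refine ⟨j, i, w, h, a, ha2, hprim.2.1, hprim.1, by omega, hin, ?_, ?_, ?_⟩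
    · intro x hx y hy
      show A (i + y) (j + x) = A (i + y % h) (j + x % w)
      exact hocc y hy x (by omega)
    · obtain ⟨hh, hw, hP⟩ := hprim
      refine ⟨hw, hh, ?_⟩
      intro p q hp hq hpw hqh htile
      have := hP q p hq hp hqh hpw ?_
      · exact ⟨this.2, this.1⟩
      · intro x hx y hy
        have h2 := htile y hy x hx
        simp only at h2
        exact h2
    · rw [hceq]
      refine Prod.ext ?_ (Prod.ext rfl ?_)
      · show 2 * 1 * w = 2 * w
        norm_num
      · show (fun x y => (content A i j (2 * a * h) (2 * 1 * w)).2.2 y x)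
          = (content (fun x y => A y x) j i (2 * w) (2 * a * h)).2.2
        funext x y
        show (if y < 2 * a * h ∧ x < 2 * 1 * w then some (A (i + y) (j + x)) else none)
          = (if x < 2 * w ∧ y < 2 * a * h then some (A (i + y) (j + x)) else none)
        by_cases hcnd : x < 2 * w ∧ y < 2 * a * h
        · rw [if_pos ⟨hcnd.2, by omega⟩, if_pos hcnd]
        · rw [if_neg (fun hu => hcnd ⟨by omega, hu.1⟩), if_neg hcnd]

end TwoD
end Aux

/-- There is a constant `C > 0` such that every `n × n` 2D-string
(`n ≥ 2`) over any alphabet contains at most `C · n² · (log₂ n)²` distinct thin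
quartics. -/
theorem distinct_thin_quartics_upper_bound :
    ∃ C : ℝ, 0 < C ∧ ∀ (n : ℕ), 2 ≤ n → ∀ (α : Type*) (A : ℕ → ℕ → α),
      ((ThinQuarticContents A n).ncard : ℝ) ≤ C * (n : ℝ) ^ 2 * (Real.logb 2 n) ^ 2 := by
  refine ⟨16, by norm_num, ?_⟩
  intro n hn α A
  obtain ⟨fin₁, card₁⟩ := horiz_card A n
  obtain ⟨fin₂, card₂⟩ := horiz_card (fun x y => A y x) n
  have hsub := thin_subset A n
  have fin₂' : (tauC ⁻¹' (Horiz (fun x y => A y x) n)).Finite :=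
    Set.Finite.preimage tauC_inj.injOn fin₂
  have h1 := Set.ncard_le_ncard hsub (fin₁.union fin₂')
  have h2 := Set.ncard_union_le (Horiz A n) (tauC ⁻¹' (Horiz (fun x y => A y x) n))
  have h3 : (tauC ⁻¹' (Horiz (fun x y => A y x) n)).ncard
      ≤ (Horiz (fun x y => A y x) n).ncard :=
    Set.ncard_le_ncard_of_injOn tauC (fun c hcm => hcm) tauC_inj.injOn fin₂
  set L := Nat.log 2 n + 1 with hLdef
  have hN : (ThinQuarticContents A n).ncard ≤ 4 * (n * n * L * L) := by omega
  have hlog1 : (1:ℝ) ≤ Real.logb 2 n := by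
    rw [show (1:ℝ) = Real.logb 2 2 from (Real.logb_self_eq_one (by norm_num)).symm]
    exact Real.logb_le_logb_of_le (by norm_num) (by norm_num) (by exact_mod_cast hn)
  have hlogN : ((Nat.log 2 n : ℕ) : ℝ) ≤ Real.logb 2 n := by
    have hp : ((2:ℕ) ^ Nat.log 2 n : ℝ) ≤ (n:ℝ) := by
      exact_mod_cast Nat.pow_log_le_self 2 (by omega)
    calc ((Nat.log 2 n : ℕ) : ℝ) = Real.logb 2 ((2:ℝ) ^ Nat.log 2 n) := by
          rw [Real.logb_pow, Real.logb_self_eq_one (by norm_num), mul_one]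
      _ ≤ Real.logb 2 n := Real.logb_le_logb_of_le (by norm_num) (by positivity) hp
  have hLreal : (L : ℝ) ≤ 2 * Real.logb 2 n := by
    rw [hLdef]
    push_cast
    linarith
  have hL0 : (0:ℝ) ≤ (L:ℝ) := by positivity
  have hlg0 : (0:ℝ) ≤ 2 * Real.logb 2 n := by linarith
  have h5 : (L:ℝ) * L ≤ (2 * Real.logb 2 n) * (2 * Real.logb 2 n) :=
    mul_le_mul hLreal hLreal hL0 hlg0
  have hcast : ((ThinQuarticContents A n).ncard : ℝ) ≤ ((4 * (n * n * L * L) : ℕ) : ℝ) := by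
    exact_mod_cast hN
  calc ((ThinQuarticContents A n).ncard : ℝ)
      ≤ ((4 * (n * n * L * L) : ℕ) : ℝ) := hcast
    _ = 4 * ((n:ℝ) * n) * ((L:ℝ) * L) := by push_cast; ring
    _ ≤ 4 * ((n:ℝ) * n) * ((2 * Real.logb 2 n) * (2 * Real.logb 2 n)) := by
        apply mul_le_mul_of_nonneg_left h5 (by positivity)
    _ = 16 * (n : ℝ) ^ 2 * (Real.logb 2 n) ^ 2 := by ring

end Formal
end

section
/- For all non-negative integers a and b and every n×n 2D-string A, the number of distinct subarrays of A of the form W^{α,β}, where α and β are even integers with α ≥ 4 and β ≥ 4 and W is a primitive (a,b)-array, is at most 4(n+1)². -/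
open scoped Classical

namespace Formal

variable {α : Type*}

/-! ### Auxiliary lemmas for Statement 12 -/

section Aux

variable {β : Type*}

/-- Periodicity of a function on a finite window. -/
def AuxPer (f : ℕ → β) (d L : ℕ) : Prop := ∀ x, x + d < L → f x = f (x + d)

lemma auxPer_mono {f : ℕ → β} {d L L' : ℕ} (h : L' ≤ L) (H : AuxPer f d L) :
    AuxPer f d L' := fun x hx => H x (lt_of_lt_of_le hx h)

/-- Fine–Wilf periodicity lemma (gcd version, prefix form). -/
lemma aux_fw : ∀ (s p q L : ℕ) (f : ℕ → β), p + q ≤ s → 0 < p → 0 < q →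
    AuxPer f p L → AuxPer f q L →
    ∀ x, x + p + q < L + Nat.gcd p q → f x = f (x + Nat.gcd p q) := by
  intro s
  induction s using Nat.strong_induction_on with
  | _ s ih =>
    intro p q L f hs hp hq hP hQ x hx
    rcases lt_trichotomy p q with hlt | rfl | hgt
    · have hq' : 0 < q - p := by omega
      have hPQ : AuxPer f (q - p) (L - p) := by
        intro t ht
        have h1 : t + q < L := by omega
        have e1 : f t = f (t + q) := hQ t h1
        have e2 : f (t + (q - p)) = f (t + (q - p) + p) := hP _ (by omega)
        have e3 : t + (q - p) + p = t + q := by omega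
        rw [e1, e2, e3]
      have hP' : AuxPer f p (L - p) := auxPer_mono (Nat.sub_le _ _) hP
      have hgcd : Nat.gcd p (q - p) = Nat.gcd p q := by
        conv_rhs => rw [← Nat.sub_add_cancel (le_of_lt hlt)]
        rw [Nat.gcd_add_self_right]
      have := ih q (by omega) p (q - p) (L - p) f (by omega) hp hq' hP' hPQ x
        (by rw [hgcd]; omega)
      rwa [hgcd] at this
    · rw [Nat.gcd_self] at hx ⊢; exact hP x (by omega)
    · have hp' : 0 < p - q := by omega
      have hQP : AuxPer f (p - q) (L - q) := by
        intro t ht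
        have h1 : t + p < L := by omega
        have e1 : f t = f (t + p) := hP t h1
        have e2 : f (t + (p - q)) = f (t + (p - q) + q) := hQ _ (by omega)
        have e3 : t + (p - q) + q = t + p := by omega
        rw [e1, e2, e3]
      have hQ' : AuxPer f q (L - q) := auxPer_mono (Nat.sub_le _ _) hQ
      have hgcd : Nat.gcd (p - q) q = Nat.gcd p q := by
        conv_rhs => rw [Nat.gcd_comm]
        conv_rhs => rw [← Nat.sub_add_cancel (le_of_lt hgt)]
        rw [Nat.gcd_add_self_right, Nat.gcd_comm]
      have := ih p (by omega) (p - q) q (L - q) f (by omega) hp' hq hQP hQ' x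
        (by rw [hgcd]; omega)
      rwa [hgcd] at this

/-- From two periods on a `4 h'` window, reduction modulo the gcd on a prefix. -/
lemma aux_key (col : ℕ → β) (h h' : ℕ) (h0 : 0 < h) (h0' : 0 < h')
    (hle : h ≤ 2 * h') (P1 : AuxPer col h (4 * h')) (P2 : AuxPer col h' (4 * h')) :
    ∀ x, x < h' → col x = col (x % Nat.gcd h h') := by
  set g := Nat.gcd h h' with hg
  have hg0 : 0 < g := Nat.gcd_pos_of_pos_left _ h0
  have hgh' : g ≤ h' := Nat.le_of_dvd h0' (Nat.gcd_dvd_right h h')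
  have main : ∀ x, x + h + h' < 4 * h' + g → col x = col (x + g) :=
    aux_fw (h + h') h h' (4 * h') col le_rfl h0 h0' P1 P2
  intro x
  induction x using Nat.strong_induction_on with
  | _ x ihx =>
    intro hx
    by_cases hxg : x < g
    · rw [Nat.mod_eq_of_lt hxg]
    · have h1 : col (x - g) = col (x - g + g) := main (x - g) (by omega)
      have h2 : x - g + g = x := by omega
      rw [h2] at h1
      have h3 := ihx (x - g) (by omega) (by omega)
      have h4 : (x - g) % g = x % g := by
        conv_rhs => rw [← h2]
        rw [Nat.add_mod_right]
      rw [← h1, h3, h4]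

lemma aux_dvd_eq {h h' : ℕ} (hd : h' ∣ h) (h0 : 0 < h) (hlt : h < 2 * h') : h = h' := by
  obtain ⟨k, rfl⟩ := hd
  rcases Nat.eq_zero_or_pos h' with h0' | h0'
  · subst h0'; simp at h0
  · have hk2 : k < 2 := by
      have : h' * k < h' * 2 := by omega
      exact Nat.lt_of_mul_lt_mul_left this
    have hk1 : 1 ≤ k := by
      by_contra hk
      have : k = 0 := by omega
      subst this; simp at h0
    have : k = 1 := by omega
    subst this; simp

lemma aux_vert_dvd (A : ℕ → ℕ → β) (u v h w h' w' : ℕ) (W W' : ℕ → ℕ → β)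
    (hP' : PrimitiveA W' h' w') (h0 : 0 < h) (hle : h' ≤ h)
    (hd1 : h < 2 * h') (hd4 : w' < 2 * w)
    (hT : ∀ x < 4 * h, ∀ y < 4 * w, A (u + x) (v + y) = W (x % h) (y % w))
    (hT' : ∀ x < 4 * h', ∀ y < 4 * w', A (u + x) (v + y) = W' (x % h') (y % w')) :
    h' ∣ h := by
  obtain ⟨h0', hw0', hPrim⟩ := hP'
  set g := Nat.gcd h h' with hg
  have hg0 : 0 < g := Nat.gcd_pos_of_pos_left _ h0
  have hgh' : g ≤ h' := Nat.le_of_dvd h0' (Nat.gcd_dvd_right h h')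
  have tile : ∀ x < h', ∀ y < w', W' x y = W' (x % g) (y % w') := by
    intro x hx y hy
    have hy4w : y < 4 * w := by omega
    have hy4w' : y < 4 * w' := by omega
    set col : ℕ → β := fun t => A (u + t) (v + y) with hcol
    have P1 : AuxPer col h (4 * h') := by
      intro t ht
      have ht4h : t < 4 * h := by omega
      have ht4h2 : t + h < 4 * h := by omega
      show A (u + t) (v + y) = A (u + (t + h)) (v + y)
      rw [hT t ht4h y hy4w, hT (t + h) ht4h2 y hy4w, Nat.add_mod_right]
    have P2 : AuxPer col h' (4 * h') := by
      intro t ht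
      have ht4h : t < 4 * h' := by omega
      have ht4h2 : t + h' < 4 * h' := by omega
      show A (u + t) (v + y) = A (u + (t + h')) (v + y)
      rw [hT' t ht4h y hy4w', hT' (t + h') ht4h2 y hy4w', Nat.add_mod_right]
    have hkey := aux_key col h h' h0 h0' (le_of_lt hd1) P1 P2 x hx
    have e1 : W' x y = col x := by
      show _ = A (u + x) (v + y)
      rw [hT' x (by omega) y hy4w', Nat.mod_eq_of_lt hx, Nat.mod_eq_of_lt hy]
    have e2 : col (x % g) = W' (x % g) (y % w') := by
      show A (u + (x % g)) (v + y) = _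
      have hxg : x % g < h' := lt_of_lt_of_le (Nat.mod_lt _ hg0) hgh'
      rw [hT' (x % g) (by omega) y hy4w', Nat.mod_eq_of_lt hxg]
    rw [e1, hkey, e2]
  have := hPrim g w' hg0 hw0' (Nat.gcd_dvd_right h h') dvd_rfl tile
  rw [← this.1]
  exact Nat.gcd_dvd_left h h'

lemma aux_horiz_dvd (A : ℕ → ℕ → β) (u v h w h' w' : ℕ) (W W' : ℕ → ℕ → β)
    (hP' : PrimitiveA W' h' w') (w0 : 0 < w) (hle : w' ≤ w)
    (hd1 : w < 2 * w') (hd2 : h' < 2 * h)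
    (hT : ∀ x < 4 * h, ∀ y < 4 * w, A (u + x) (v + y) = W (x % h) (y % w))
    (hT' : ∀ x < 4 * h', ∀ y < 4 * w', A (u + x) (v + y) = W' (x % h') (y % w')) :
    w' ∣ w := by
  obtain ⟨h0', hw0', hPrim⟩ := hP'
  set g := Nat.gcd w w' with hg
  have hg0 : 0 < g := Nat.gcd_pos_of_pos_left _ w0
  have hgw' : g ≤ w' := Nat.le_of_dvd hw0' (Nat.gcd_dvd_right w w')
  have tile : ∀ x < h', ∀ y < w', W' x y = W' (x % h') (y % g) := by
    intro x hx y hy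
    have hx4h : x < 4 * h := by omega
    have hx4h' : x < 4 * h' := by omega
    set row : ℕ → β := fun t => A (u + x) (v + t) with hrow
    have P1 : AuxPer row w (4 * w') := by
      intro t ht
      have ht4 : t < 4 * w := by omega
      have ht42 : t + w < 4 * w := by omega
      show A (u + x) (v + t) = A (u + x) (v + (t + w))
      rw [hT x hx4h t ht4, hT x hx4h (t + w) ht42, Nat.add_mod_right]
    have P2 : AuxPer row w' (4 * w') := by
      intro t ht
      have ht4 : t < 4 * w' := by omega
      have ht42 : t + w' < 4 * w' := by omega
      show A (u + x) (v + t) = A (u + x) (v + (t + w'))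
      rw [hT' x hx4h' t ht4, hT' x hx4h' (t + w') ht42, Nat.add_mod_right]
    have hkey := aux_key row w w' w0 hw0' (le_of_lt hd1) P1 P2 y hy
    have e1 : W' x y = row y := by
      show _ = A (u + x) (v + y)
      rw [hT' x hx4h' y (by omega), Nat.mod_eq_of_lt hx, Nat.mod_eq_of_lt hy]
    have e2 : row (y % g) = W' (x % h') (y % g) := by
      show A (u + x) (v + (y % g)) = _
      have hyg : y % g < w' := lt_of_lt_of_le (Nat.mod_lt _ hg0) hgw'
      rw [hT' x hx4h' (y % g) (by omega), Nat.mod_eq_of_lt hyg]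
    rw [e1, hkey, e2]
  have := hPrim h' g h0' hg0 dvd_rfl (Nat.gcd_dvd_right w w') tile
  rw [← this.2]
  exact Nat.gcd_dvd_left w w'

/-- Synchronization: two primitive roots of comparable dyadic dimensions tiling a common
`4×4`-power window agree. -/
lemma aux_sync (A : ℕ → ℕ → β) (u v h w h' w' : ℕ) (W W' : ℕ → ℕ → β)
    (hP : PrimitiveA W h w) (hP' : PrimitiveA W' h' w')
    (hd1 : h < 2 * h') (hd2 : h' < 2 * h) (hd3 : w < 2 * w') (hd4 : w' < 2 * w)
    (hT : ∀ x < 4 * h, ∀ y < 4 * w, A (u + x) (v + y) = W (x % h) (y % w))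
    (hT' : ∀ x < 4 * h', ∀ y < 4 * w', A (u + x) (v + y) = W' (x % h') (y % w')) :
    h = h' ∧ w = w' ∧ ∀ x < h, ∀ y < w, W x y = W' x y := by
  have h0 : 0 < h := hP.1
  have h0' : 0 < h' := hP'.1
  have w0 : 0 < w := hP.2.1
  have w0' : 0 < w' := hP'.2.1
  have hh : h = h' := by
    rcases le_total h' h with hc | hc
    · exact aux_dvd_eq (aux_vert_dvd A u v h w h' w' W W' hP' h0 hc hd1 hd4 hT hT') h0 hd1
    · exact (aux_dvd_eq (aux_vert_dvd A u v h' w' h w W' W hP h0' hc hd2 hd3 hT' hT) h0' hd2).symm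
  have hw : w = w' := by
    rcases le_total w' w with hc | hc
    · exact aux_dvd_eq (aux_horiz_dvd A u v h w h' w' W W' hP' w0 hc hd3 hd2 hT hT') w0 hd3
    · exact (aux_dvd_eq (aux_horiz_dvd A u v h' w' h w W' W hP w0' hc hd4 hd1 hT' hT) w0' hd4).symm
  refine ⟨hh, hw, ?_⟩
  intro x hx y hy
  have e1 : W x y = A (u + x) (v + y) := by
    rw [hT x (by omega) y (by omega), Nat.mod_eq_of_lt hx, Nat.mod_eq_of_lt hy]
  have e2 : W' x y = A (u + x) (v + y) := by
    rw [hT' x (by omega) y (by omega), Nat.mod_eq_of_lt (hh ▸ hx), Nat.mod_eq_of_lt (hw ▸ hy)]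
  rw [e1, ← e2]

/-- An `m × k` (axis-aligned, unit-spaced) rectangle of cells embeds in `Z`. -/
def AuxFits (Z : Finset (ℕ × ℕ)) (m k : ℕ) : Prop :=
  ∃ u v : ℕ, ∀ i < m, ∀ j < k, (u + i, v + j) ∈ Z

/-- The set of shapes (with coordinates at most `N`) of rectangles embeddable in `Z`. -/
noncomputable def auxShapes (N : ℕ) (Z : Finset (ℕ × ℕ)) : Finset (ℕ × ℕ) :=
  ((Finset.range (N + 1)) ×ˢ (Finset.range (N + 1))).filter
    (fun s => 1 ≤ s.1 ∧ 1 ≤ s.2 ∧ AuxFits Z s.1 s.2)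

/-- The number of distinct rectangle shapes embeddable in a finite set of cells is at most
the number of cells. -/
lemma aux_shape_card (N : ℕ) : ∀ Z : Finset (ℕ × ℕ), (auxShapes N Z).card ≤ Z.card := by
  intro Z
  induction Z using Finset.strongInduction with
  | _ Z ih =>
    by_cases hZe : Z = ∅
    · subst hZe
      have : auxShapes N ∅ = ∅ := by
        ext s
        simp only [auxShapes, Finset.mem_filter, Finset.notMem_empty, iff_false, not_and]
        intro _ h1 _ hfits
        obtain ⟨u, v, hv⟩ := hfits
        exact absurd (hv 0 (by omega) 0 (by omega)) (by simp)
      rw [this]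
    · have hne : Z.Nonempty := Finset.nonempty_iff_ne_empty.mpr hZe
      have himne : (Z.image Prod.fst).Nonempty := hne.image _
      set R := (Z.image Prod.fst).max' himne with hR
      set B := Z.filter (fun z => z.1 = R) with hB
      set Z' := Z.filter (fun z => ¬ z.1 = R) with hZ'
      have hrowle : ∀ z ∈ Z, z.1 ≤ R := by
        intro z hz
        exact Finset.le_max' _ _ (Finset.mem_image_of_mem _ hz)
      have hBne : B.Nonempty := by
        obtain ⟨z, hz, hzR⟩ := Finset.mem_image.mp ((Z.image Prod.fst).max'_mem himne)
        exact ⟨z, Finset.mem_filter.mpr ⟨hz, hzR⟩⟩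
      have hss : Z' ⊂ Z := by
        refine Finset.ssubset_iff_of_subset (Finset.filter_subset _ _) |>.mpr ?_
        obtain ⟨z, hz⟩ := hBne
        have hz1 := Finset.mem_filter.mp hz
        exact ⟨z, hz1.1, by simp [hZ', hz1.2]⟩
      have ih' := ih Z' hss
      set killed := (auxShapes N Z) \ (auxShapes N Z') with hk
      have h1 : (auxShapes N Z).card ≤ (auxShapes N Z').card + killed.card := by
        have hsub : auxShapes N Z ⊆ (auxShapes N Z') ∪ killed := by
          intro s hs
          by_cases h : s ∈ auxShapes N Z'
          · exact Finset.mem_union_left _ h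
          · exact Finset.mem_union_right _ (Finset.mem_sdiff.mpr ⟨hs, h⟩)
        calc (auxShapes N Z).card ≤ ((auxShapes N Z') ∪ killed).card := Finset.card_le_card hsub
          _ ≤ _ := Finset.card_union_le _ _
      have hkale : killed.card ≤ B.card := by
        rcases Finset.eq_empty_or_nonempty killed with hke | hkne
        · simp [hke]
        · have fact1 : ∀ s ∈ killed, ∀ u v : ℕ,
              (∀ i < s.1, ∀ j < s.2, (u + i, v + j) ∈ Z) → u + s.1 = R + 1 := by
            intro s hs u v hw
            have hs1 := Finset.mem_sdiff.mp hs
            have hmem := Finset.mem_filter.mp hs1.1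
            have hm1 := hmem.2.1
            have hk1 := hmem.2.2.1
            have hle : u + s.1 ≤ R + 1 := by
              have := hrowle _ (hw (s.1 - 1) (by omega) 0 (by omega))
              simp at this
              omega
            by_contra hne2
            have : s ∈ auxShapes N Z' := by
              refine Finset.mem_filter.mpr ⟨hmem.1, hm1, hk1, u, v, ?_⟩
              intro i hi j hj
              refine Finset.mem_filter.mpr ⟨hw i hi j hj, ?_⟩
              simp only
              omega
            exact hs1.2 this
          have fact2 : ∀ s ∈ killed, ∀ s' ∈ killed, s.2 = s'.2 → s = s' := by
            have aux : ∀ s ∈ killed, ∀ s' ∈ killed, s.2 = s'.2 → s.1 < s'.1 → False := by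
              intro s hs s' hs' heq hlt
              have hs1 := Finset.mem_sdiff.mp hs
              have hmem := Finset.mem_filter.mp hs1.1
              have hs1' := Finset.mem_sdiff.mp hs'
              have hmem' := Finset.mem_filter.mp hs1'.1
              obtain ⟨u', v', hw'⟩ := hmem'.2.2.2
              have : s ∈ auxShapes N Z' := by
                refine Finset.mem_filter.mpr ⟨hmem.1, hmem.2.1, hmem.2.2.1, u', v', ?_⟩
                intro i hi j hj
                have hcell : (u' + i, v' + j) ∈ Z := hw' i (by omega) j (by omega)
                refine Finset.mem_filter.mpr ⟨hcell, ?_⟩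
                have hbot := fact1 s' hs' u' v' hw'
                simp only
                omega
              exact hs1.2 this
            intro s hs s' hs' heq
            rcases lt_trichotomy s.1 s'.1 with h | h | h
            · exact absurd (aux s hs s' hs' heq h) (by simp)
            · exact Prod.ext h heq
            · exact absurd (aux s' hs' s hs heq.symm h) (by simp)
          obtain ⟨smax, hsmax, hmax⟩ := Finset.exists_max_image killed (fun s => s.2) hkne
          have hsm1 := Finset.mem_sdiff.mp hsmax
          have hmemm := Finset.mem_filter.mp hsm1.1
          obtain ⟨um, vm, hwm⟩ := hmemm.2.2.2
          have hbotm := fact1 smax hsmax um vm hwm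
          refine Finset.card_le_card_of_injOn (fun s => (R, vm + (s.2 - 1))) ?_ ?_
          · intro s hs
            have hs1 := Finset.mem_sdiff.mp hs
            have hmem := Finset.mem_filter.mp hs1.1
            have h1le : 1 ≤ s.2 := hmem.2.2.1
            have hsle : s.2 ≤ smax.2 := hmax s hs
            have hcell : (um + (smax.1 - 1), vm + (s.2 - 1)) ∈ Z :=
              hwm (smax.1 - 1) (by have := hmemm.2.1; omega) (s.2 - 1) (by omega)
            have hrow : um + (smax.1 - 1) = R := by have := hmemm.2.1; omega
            rw [hrow] at hcell
            exact Finset.mem_filter.mpr ⟨hcell, rfl⟩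
          · intro s hs s' hs' heq
            have h2 : s.2 = s'.2 := by
              have hs1 := Finset.mem_sdiff.mp hs
              have hmem := Finset.mem_filter.mp hs1.1
              have hs1' := Finset.mem_sdiff.mp hs'
              have hmem' := Finset.mem_filter.mp hs1'.1
              have e := congrArg Prod.snd heq
              simp only at e
              have := hmem.2.2.1
              have := hmem'.2.2.1
              omega
            exact fact2 s hs s' hs' h2
      have h3 : B.card + Z'.card = Z.card := by
        rw [hB, hZ']
        exact Finset.card_filter_add_card_filter_not (s := Z)
          (p := fun z : ℕ × ℕ => z.1 = R)
      omega

lemma aux_grid_mod (h s x : ℕ) : (2 * h * s + x) % h = x % h := by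
  have e : 2 * h * s + x = x + h * (2 * s) := by ring
  rw [e, Nat.add_mul_mod_self_left]

/-- `ω^{4,4}` (where `ω` is a content triple) occurs at `(u,v)` in `A`. -/
def AuxTile (A : ℕ → ℕ → β) (ω : ℕ × ℕ × (ℕ → ℕ → Option β)) (u v : ℕ) : Prop :=
  ∀ x < 4 * ω.1, ∀ y < 4 * ω.2.1,
    (some (A (u + x) (v + y)) : Option β) = ω.2.2 (x % ω.1) (y % ω.2.1)

end Aux

/-- For all non-negative integers `a`, `b` and every `n × n`
2D-string `A`, the number of distinct subarrays of `A` of the form `W^{α,β}` with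
`α, β` even, `α, β ≥ 4`, and `W` a primitive `(a,b)`-array, is at most `4(n+1)²`. -/
theorem thick_powers_upper_bound (a b n : ℕ) (σ : Type*) (A : ℕ → ℕ → σ) :
    ({c : ℕ × ℕ × (ℕ → ℕ → Option σ) |
        ∃ i j h w al be, IsABDims a b h w ∧ 4 ≤ al ∧ 4 ≤ be ∧ 2 ∣ al ∧ 2 ∣ be ∧
          PrimitiveA (fun x y => A (i + x) (j + y)) h w ∧
          i + al * h ≤ n ∧ j + be * w ≤ n ∧ OccPow A i j h w al be ∧
          c = content A i j (al * h) (be * w)}).ncard ≤ 4 * (n + 1) ^ 2 := by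
  classical
  set S : Set (ℕ × ℕ × (ℕ → ℕ → Option σ)) :=
    {c : ℕ × ℕ × (ℕ → ℕ → Option σ) |
        ∃ i j h w al be, IsABDims a b h w ∧ 4 ≤ al ∧ 4 ≤ be ∧ 2 ∣ al ∧ 2 ∣ be ∧
          PrimitiveA (fun x y => A (i + x) (j + y)) h w ∧
          i + al * h ≤ n ∧ j + be * w ≤ n ∧ OccPow A i j h w al be ∧
          c = content A i j (al * h) (be * w)} with hSdef
  -- choose witnesses for each element of `S`
  have hwit : ∀ c : ℕ × ℕ × (ℕ → ℕ → Option σ), ∃ i j h w p q : ℕ, c ∈ S →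
      (IsABDims a b h w ∧ 2 ≤ p ∧ 2 ≤ q ∧
        PrimitiveA (fun x y => A (i + x) (j + y)) h w ∧
        i + 2 * p * h ≤ n ∧ j + 2 * q * w ≤ n ∧ OccPow A i j h w (2 * p) (2 * q) ∧
        c = content A i j (2 * p * h) (2 * q * w)) := by
    intro c
    by_cases hc : c ∈ S
    · obtain ⟨i, j, h, w, al, be, hab, hal, hbe, hal2, hbe2, hprim, hin, hjn, hocc, hceq⟩ := hc
      obtain ⟨p, rfl⟩ := hal2
      obtain ⟨q, rfl⟩ := hbe2
      exact ⟨i, j, h, w, p, q,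
        fun _ => ⟨hab, by omega, by omega, hprim, hin, hjn, hocc, hceq⟩⟩
    · exact ⟨0, 0, 0, 0, 0, 0, fun hmem => absurd hmem hc⟩
  choose Gi Gj Gh Gw Gp Gq hG using hwit
  have hGh0 : ∀ c ∈ S, 0 < Gh c := by
    intro c hc
    exact lt_of_lt_of_le (pow_pos (by norm_num : (0:ℕ) < 2) a) (hG c hc).1.1
  have hGw0 : ∀ c ∈ S, 0 < Gw c := by
    intro c hc
    exact lt_of_lt_of_le (pow_pos (by norm_num : (0:ℕ) < 2) b) (hG c hc).1.2.2.1
  -- `S` is finite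
  have hSfin : S.Finite := by
    have hsub : S ⊆ (fun t : (ℕ × ℕ) × ℕ × ℕ => content A t.1.1 t.1.2 t.2.1 t.2.2) ''
        ((Set.Iic n ×ˢ Set.Iic n) ×ˢ (Set.Iic n ×ˢ Set.Iic n)) := by
      intro c hc
      obtain ⟨i, j, h, w, al, be, hab, hal, hbe, _hal2, _hbe2, _hprim, hin, hjn, _hocc, hceq⟩ := hc
      have h0 : 0 < h := lt_of_lt_of_le (pow_pos (by norm_num : (0:ℕ) < 2) a) hab.1
      have w0 : 0 < w := lt_of_lt_of_le (pow_pos (by norm_num : (0:ℕ) < 2) b) hab.2.2.1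
      have hal0 : 0 < al * h := Nat.mul_pos (by omega) h0
      have hbe0 : 0 < be * w := Nat.mul_pos (by omega) w0
      refine ⟨((i, j), (al * h, be * w)), ⟨⟨?_, ?_⟩, ?_, ?_⟩, hceq.symm⟩ <;>
        simp only [Set.mem_Iic] <;> omega
    exact Set.Finite.subset (Set.Finite.image _
      (((Set.finite_Iic n).prod (Set.finite_Iic n)).prod
        ((Set.finite_Iic n).prod (Set.finite_Iic n)))) hsub
  -- coordinates of grid cells stay inside the board
  have hCoordLe : ∀ c ∈ S, ∀ s, s + 2 ≤ Gp c → Gi c + 2 * Gh c * s ≤ n := by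
    intro c hc s hs
    obtain ⟨hab, hp2, hq2, hprim, hin, hjn, hocc, hceq⟩ := hG c hc
    have e1 : 2 * Gh c * (s + 2) ≤ 2 * Gh c * Gp c := Nat.mul_le_mul_left _ hs
    have e2 : 2 * Gh c * (s + 2) = 2 * Gh c * s + 4 * Gh c := by ring
    have e3 : 2 * Gh c * Gp c = 2 * Gp c * Gh c := by ring
    omega
  have hCoordLe' : ∀ c ∈ S, ∀ t, t + 2 ≤ Gq c → Gj c + 2 * Gw c * t ≤ n := by
    intro c hc t ht
    obtain ⟨hab, hp2, hq2, hprim, hin, hjn, hocc, hceq⟩ := hG c hc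
    have e1 : 2 * Gw c * (t + 2) ≤ 2 * Gw c * Gq c := Nat.mul_le_mul_left _ ht
    have e2 : 2 * Gw c * (t + 2) = 2 * Gw c * t + 4 * Gw c := by ring
    have e3 : 2 * Gw c * Gq c = 2 * Gq c * Gw c := by ring
    omega
  -- `ω^{4,4}` occurs at every grid point of an occurrence
  have hTileGrid : ∀ c ∈ S, ∀ s t : ℕ, s + 2 ≤ Gp c → t + 2 ≤ Gq c →
      AuxTile A (content A (Gi c) (Gj c) (Gh c) (Gw c))
        (Gi c + 2 * Gh c * s) (Gj c + 2 * Gw c * t) := by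
    intro c hc s t hs ht
    obtain ⟨hab, hp2, hq2, hprim, hin, hjn, hocc, hceq⟩ := hG c hc
    have h0 : 0 < Gh c := hGh0 c hc
    have w0 : 0 < Gw c := hGw0 c hc
    intro x hx y hy
    have hx' : x < 4 * Gh c := hx
    have hy' : y < 4 * Gw c := hy
    have hb1 : 2 * Gh c * s + x < 2 * Gp c * Gh c := by
      have e1 : 2 * Gh c * (s + 2) ≤ 2 * Gh c * Gp c := Nat.mul_le_mul_left _ hs
      have e2 : 2 * Gh c * (s + 2) = 2 * Gh c * s + 4 * Gh c := by ring
      have e3 : 2 * Gh c * Gp c = 2 * Gp c * Gh c := by ring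
      omega
    have hb2 : 2 * Gw c * t + y < 2 * Gq c * Gw c := by
      have e1 : 2 * Gw c * (t + 2) ≤ 2 * Gw c * Gq c := Nat.mul_le_mul_left _ ht
      have e2 : 2 * Gw c * (t + 2) = 2 * Gw c * t + 4 * Gw c := by ring
      have e3 : 2 * Gw c * Gq c = 2 * Gq c * Gw c := by ring
      omega
    have o := hocc (2 * Gh c * s + x) hb1 (2 * Gw c * t + y) hb2
    rw [aux_grid_mod, aux_grid_mod] at o
    show (some (A (Gi c + 2 * Gh c * s + x) (Gj c + 2 * Gw c * t + y)) : Option σ) =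
      (if x % Gh c < Gh c ∧ y % Gw c < Gw c
        then some (A (Gi c + x % Gh c) (Gj c + y % Gw c)) else none)
    rw [if_pos ⟨Nat.mod_lt _ h0, Nat.mod_lt _ w0⟩]
    refine congrArg some ?_
    have e4 : Gi c + 2 * Gh c * s + x = Gi c + (2 * Gh c * s + x) := by omega
    have e5 : Gj c + 2 * Gw c * t + y = Gj c + (2 * Gw c * t + y) := by omega
    rw [e4, e5, o]
  -- the injection `c ↦ (root content, p, q)`
  set F1 : (ℕ × ℕ × (ℕ → ℕ → Option σ)) → (ℕ × ℕ × (ℕ → ℕ → Option σ)) × ℕ × ℕ :=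
    fun c => (content A (Gi c) (Gj c) (Gh c) (Gw c), Gp c, Gq c) with hF1
  have hinj : ∀ c ∈ S, ∀ c' ∈ S, F1 c = F1 c' → c = c' := by
    intro c hc c' hc' he
    obtain ⟨hab, hp2, hq2, hprim, hin, hjn, hocc, hceq⟩ := hG c hc
    obtain ⟨hab', hp2', hq2', hprim', hin', hjn', hocc', hceq'⟩ := hG c' hc'
    have h0 : 0 < Gh c := hGh0 c hc
    have w0 : 0 < Gw c := hGw0 c hc
    have e1 : content A (Gi c) (Gj c) (Gh c) (Gw c)
        = content A (Gi c') (Gj c') (Gh c') (Gw c') := congrArg Prod.fst he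
    have ep : Gp c = Gp c' := congrArg (fun t => t.2.1) he
    have eq' : Gq c = Gq c' := congrArg (fun t => t.2.2) he
    have eh : Gh c = Gh c' := congrArg (fun t => t.1) e1
    have ew : Gw c = Gw c' := congrArg (fun t => t.2.1) e1
    have ee : ∀ x y, (if x < Gh c ∧ y < Gw c then some (A (Gi c + x) (Gj c + y)) else none)
        = (if x < Gh c' ∧ y < Gw c' then some (A (Gi c' + x) (Gj c' + y)) else none) :=
      fun x y => congrFun (congrFun (congrArg (fun t => t.2.2) e1) x) y
    rw [← eh, ← ew, ← ep, ← eq'] at hocc' hceq'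
    rw [hceq, hceq']
    refine Prod.ext rfl (Prod.ext rfl ?_)
    funext x y
    show (if x < 2 * Gp c * Gh c ∧ y < 2 * Gq c * Gw c
        then some (A (Gi c + x) (Gj c + y)) else none)
      = (if x < 2 * Gp c * Gh c ∧ y < 2 * Gq c * Gw c
        then some (A (Gi c' + x) (Gj c' + y)) else none)
    by_cases hxy : x < 2 * Gp c * Gh c ∧ y < 2 * Gq c * Gw c
    · rw [if_pos hxy, if_pos hxy]
      have o1 := hocc x hxy.1 y hxy.2
      have o2 := hocc' x hxy.1 y hxy.2
      have e2 := ee (x % Gh c) (y % Gw c)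
      rw [if_pos ⟨Nat.mod_lt _ h0, Nat.mod_lt _ w0⟩] at e2
      rw [← eh, ← ew] at e2
      rw [if_pos ⟨Nat.mod_lt _ h0, Nat.mod_lt _ w0⟩] at e2
      rw [o1, o2]
      exact e2
    · rw [if_neg hxy, if_neg hxy]
  set SF : Finset (ℕ × ℕ × (ℕ → ℕ → Option σ)) := hSfin.toFinset with hSF
  set T : Finset ((ℕ × ℕ × (ℕ → ℕ → Option σ)) × ℕ × ℕ) := SF.image F1 with hTdef
  have hcard1 : S.ncard = T.card := by
    rw [Set.ncard_eq_toFinset_card S hSfin, hTdef]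
    refine (Finset.card_image_of_injOn ?_).symm
    intro c hcc c' hcc' he
    exact hinj c (hSfin.mem_toFinset.mp hcc) c' (hSfin.mem_toFinset.mp hcc') he
  set Om : Finset (ℕ × ℕ × (ℕ → ℕ → Option σ)) := T.image Prod.fst with hOmdef
  have hcard2 : T.card = ∑ ω ∈ Om, (T.filter (fun t => t.1 = ω)).card :=
    Finset.card_eq_sum_card_fiberwise (fun t ht => Finset.mem_image_of_mem _ ht)
  have hOmSpec : ∀ ω ∈ Om, ∃ c, c ∈ S ∧ content A (Gi c) (Gj c) (Gh c) (Gw c) = ω := by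
    intro ω hω
    obtain ⟨t, ht, htω⟩ := Finset.mem_image.mp hω
    obtain ⟨c, hcc, hfc⟩ := Finset.mem_image.mp ht
    refine ⟨c, hSfin.mem_toFinset.mp hcc, ?_⟩
    rw [← htω, ← hfc]
  set U : Finset (ℕ × ℕ) := Finset.range (n + 1) ×ˢ Finset.range (n + 1) with hUdef
  set Zf : (ℕ × ℕ × (ℕ → ℕ → Option σ)) → Finset (ℕ × ℕ) :=
    fun ω => U.filter (fun z => AuxTile A ω z.1 z.2) with hZfdef
  -- the per-root bound via the rectangle-shapes lemma
  have hperω : ∀ ω ∈ Om, (T.filter (fun t => t.1 = ω)).card ≤ (Zf ω).card := by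
    intro ω hω
    obtain ⟨c₀, hc₀, hωc₀⟩ := hOmSpec ω hω
    have hωh₀ : ω.1 = Gh c₀ := by rw [← hωc₀]; rfl
    have hωw₀ : ω.2.1 = Gw c₀ := by rw [← hωc₀]; rfl
    have hh0 : 0 < ω.1 := by rw [hωh₀]; exact hGh0 c₀ hc₀
    have hw0 : 0 < ω.2.1 := by rw [hωw₀]; exact hGw0 c₀ hc₀
    set fib := T.filter (fun t => t.1 = ω) with hfibdef
    set fibPQ := fib.image (fun t => t.2) with hfibPQ
    have hcardfib : fib.card = fibPQ.card := by
      rw [hfibPQ]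
      refine (Finset.card_image_of_injOn ?_).symm
      intro t ht t' ht' he2
      have e1 : t.1 = ω := (Finset.mem_filter.mp ht).2
      have e1' : t'.1 = ω := (Finset.mem_filter.mp ht').2
      exact Prod.ext (e1.trans e1'.symm) he2
    set R2 : Finset (ℕ × ℕ) := Finset.range (2 * ω.1) ×ˢ Finset.range (2 * ω.2.1) with hR2
    set Zr : ℕ × ℕ → Finset (ℕ × ℕ) := fun r =>
      ((Finset.range (n + 1)) ×ˢ (Finset.range (n + 1))).filter (fun s =>
        AuxTile A ω (r.1 + 2 * ω.1 * s.1) (r.2 + 2 * ω.2.1 * s.2) ∧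
        r.1 + 2 * ω.1 * s.1 ≤ n ∧ r.2 + 2 * ω.2.1 * s.2 ≤ n) with hZrdef
    have hsub : fibPQ ⊆ R2.biUnion (fun r => (auxShapes (n + 1) (Zr r)).image
        (fun s => (s.1 + 1, s.2 + 1))) := by
      intro pq hpq
      obtain ⟨t, ht, htpq⟩ := Finset.mem_image.mp hpq
      have htT : t ∈ T := (Finset.mem_filter.mp ht).1
      have htω : t.1 = ω := (Finset.mem_filter.mp ht).2
      obtain ⟨c, hcc, hfc⟩ := Finset.mem_image.mp htT
      have hcS : c ∈ S := hSfin.mem_toFinset.mp hcc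
      obtain ⟨hab, hp2, hq2, hprim, hin, hjn, hocc, hceq⟩ := hG c hcS
      have h0 : 0 < Gh c := hGh0 c hcS
      have w0 : 0 < Gw c := hGw0 c hcS
      have hcω : content A (Gi c) (Gj c) (Gh c) (Gw c) = ω := by rw [← htω, ← hfc]
      have hωh : ω.1 = Gh c := by rw [← hcω]; rfl
      have hωw : ω.2.1 = Gw c := by rw [← hcω]; rfl
      have hppq : (Gp c, Gq c) = pq := by rw [← htpq, ← hfc]
      have hpos1 : 0 < 2 * ω.1 := by omega
      have hpos2 : 0 < 2 * ω.2.1 := by omega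
      have hdm1 : Gi c % (2 * ω.1) + 2 * ω.1 * (Gi c / (2 * ω.1)) = Gi c :=
        Nat.mod_add_div _ _
      have hdm2 : Gj c % (2 * ω.2.1) + 2 * ω.2.1 * (Gj c / (2 * ω.2.1)) = Gj c :=
        Nat.mod_add_div _ _
      refine Finset.mem_biUnion.mpr
        ⟨(Gi c % (2 * ω.1), Gj c % (2 * ω.2.1)), ?_, ?_⟩
      · exact Finset.mem_product.mpr
          ⟨Finset.mem_range.mpr (Nat.mod_lt _ hpos1), Finset.mem_range.mpr (Nat.mod_lt _ hpos2)⟩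
      · refine Finset.mem_image.mpr ⟨(Gp c - 1, Gq c - 1), ?_, ?_⟩
        · refine Finset.mem_filter.mpr ⟨?_, ?_, ?_, ?_⟩
          · have hle1 : 2 * Gp c ≤ 2 * Gp c * Gh c := Nat.le_mul_of_pos_right _ h0
            have hle2 : 2 * Gq c ≤ 2 * Gq c * Gw c := Nat.le_mul_of_pos_right _ w0
            exact Finset.mem_product.mpr
              ⟨Finset.mem_range.mpr (by omega), Finset.mem_range.mpr (by omega)⟩
          · show 1 ≤ Gp c - 1; omega
          · show 1 ≤ Gq c - 1; omega
          · refine ⟨Gi c / (2 * ω.1), Gj c / (2 * ω.2.1), ?_⟩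
            intro s hsu tt htt
            have hs2 : s + 2 ≤ Gp c := by omega
            have ht2 : tt + 2 ≤ Gq c := by omega
            have hco1 : Gi c % (2 * ω.1) + 2 * ω.1 * (Gi c / (2 * ω.1) + s)
                = Gi c + 2 * Gh c * s := by
              rw [Nat.mul_add, hωh]
              rw [hωh] at hdm1
              omega
            have hco2 : Gj c % (2 * ω.2.1) + 2 * ω.2.1 * (Gj c / (2 * ω.2.1) + tt)
                = Gj c + 2 * Gw c * tt := by
              rw [Nat.mul_add, hωw]
              rw [hωw] at hdm2
              omega
            have hcl1 : Gi c + 2 * Gh c * s ≤ n := hCoordLe c hcS s hs2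
            have hcl2 : Gj c + 2 * Gw c * tt ≤ n := hCoordLe' c hcS tt ht2
            refine Finset.mem_filter.mpr ⟨?_, ?_, ?_, ?_⟩
            · refine Finset.mem_product.mpr
                ⟨Finset.mem_range.mpr ?_, Finset.mem_range.mpr ?_⟩
              · show Gi c / (2 * ω.1) + s < n + 1
                have hmul : Gi c / (2 * ω.1) + s ≤ 2 * ω.1 * (Gi c / (2 * ω.1) + s) :=
                  Nat.le_mul_of_pos_left _ hpos1
                omega
              · show Gj c / (2 * ω.2.1) + tt < n + 1
                have hmul : Gj c / (2 * ω.2.1) + tt ≤ 2 * ω.2.1 * (Gj c / (2 * ω.2.1) + tt) :=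
                  Nat.le_mul_of_pos_left _ hpos2
                omega
            · show AuxTile A ω
                (Gi c % (2 * ω.1) + 2 * ω.1 * (Gi c / (2 * ω.1) + s))
                (Gj c % (2 * ω.2.1) + 2 * ω.2.1 * (Gj c / (2 * ω.2.1) + tt))
              rw [hco1, hco2, ← hcω]
              exact hTileGrid c hcS s tt hs2 ht2
            · show Gi c % (2 * ω.1) + 2 * ω.1 * (Gi c / (2 * ω.1) + s) ≤ n
              rw [hco1]; exact hcl1
            · show Gj c % (2 * ω.2.1) + 2 * ω.2.1 * (Gj c / (2 * ω.2.1) + tt) ≤ n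
              rw [hco2]; exact hcl2
        · rw [← hppq]
          refine Prod.ext ?_ ?_
          · show Gp c - 1 + 1 = Gp c; omega
          · show Gq c - 1 + 1 = Gq c; omega
    have hstep1 : fibPQ.card ≤ ∑ r ∈ R2, (auxShapes (n + 1) (Zr r)).card := by
      calc fibPQ.card ≤ (R2.biUnion (fun r => (auxShapes (n + 1) (Zr r)).image
            (fun s => (s.1 + 1, s.2 + 1)))).card := Finset.card_le_card hsub
        _ ≤ ∑ r ∈ R2, ((auxShapes (n + 1) (Zr r)).image (fun s => (s.1 + 1, s.2 + 1))).card :=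
            Finset.card_biUnion_le
        _ ≤ ∑ r ∈ R2, (auxShapes (n + 1) (Zr r)).card :=
            Finset.sum_le_sum (fun r _ => Finset.card_image_le)
    have hstep2 : ∑ r ∈ R2, (auxShapes (n + 1) (Zr r)).card ≤ ∑ r ∈ R2, (Zr r).card :=
      Finset.sum_le_sum (fun r _ => aux_shape_card _ _)
    have hstep3 : ∑ r ∈ R2, (Zr r).card ≤ (Zf ω).card := by
      have hinj2 : ∀ r ∈ R2, Set.InjOn
          (fun s : ℕ × ℕ => (r.1 + 2 * ω.1 * s.1, r.2 + 2 * ω.2.1 * s.2)) (Zr r) := by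
        intro r hr s hs s' hs' he2
        have e1 : r.1 + 2 * ω.1 * s.1 = r.1 + 2 * ω.1 * s'.1 := congrArg Prod.fst he2
        have e2 : r.2 + 2 * ω.2.1 * s.2 = r.2 + 2 * ω.2.1 * s'.2 := congrArg Prod.snd he2
        have f1 : 2 * ω.1 * s.1 = 2 * ω.1 * s'.1 := by omega
        have f2 : 2 * ω.2.1 * s.2 = 2 * ω.2.1 * s'.2 := by omega
        exact Prod.ext (Nat.eq_of_mul_eq_mul_left (by omega) f1)
          (Nat.eq_of_mul_eq_mul_left (by omega) f2)
      have hdisj2 : ∀ r ∈ R2, ∀ r' ∈ R2, r ≠ r' →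
          Disjoint ((Zr r).image (fun s : ℕ × ℕ => (r.1 + 2 * ω.1 * s.1, r.2 + 2 * ω.2.1 * s.2)))
            ((Zr r').image (fun s : ℕ × ℕ => (r'.1 + 2 * ω.1 * s.1, r'.2 + 2 * ω.2.1 * s.2))) := by
        intro r hr r' hr' hne
        rw [Finset.disjoint_left]
        intro z hz hz'
        obtain ⟨s, hs, hsz⟩ := Finset.mem_image.mp hz
        obtain ⟨s', hs', hsz'⟩ := Finset.mem_image.mp hz'
        have hrm := Finset.mem_product.mp hr
        have hrm' := Finset.mem_product.mp hr'
        have hb1 : r.1 < 2 * ω.1 := Finset.mem_range.mp hrm.1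
        have hb2 : r.2 < 2 * ω.2.1 := Finset.mem_range.mp hrm.2
        have hb1' : r'.1 < 2 * ω.1 := Finset.mem_range.mp hrm'.1
        have hb2' : r'.2 < 2 * ω.2.1 := Finset.mem_range.mp hrm'.2
        apply hne
        have g1 : r.1 + 2 * ω.1 * s.1 = r'.1 + 2 * ω.1 * s'.1 := by
          have := hsz.trans hsz'.symm
          exact congrArg Prod.fst this
        have g2 : r.2 + 2 * ω.2.1 * s.2 = r'.2 + 2 * ω.2.1 * s'.2 := by
          have := hsz.trans hsz'.symm
          exact congrArg Prod.snd this
        have m1 : (r.1 + 2 * ω.1 * s.1) % (2 * ω.1) = r.1 := by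
          rw [Nat.add_mul_mod_self_left, Nat.mod_eq_of_lt hb1]
        have m1' : (r'.1 + 2 * ω.1 * s'.1) % (2 * ω.1) = r'.1 := by
          rw [Nat.add_mul_mod_self_left, Nat.mod_eq_of_lt hb1']
        have m2 : (r.2 + 2 * ω.2.1 * s.2) % (2 * ω.2.1) = r.2 := by
          rw [Nat.add_mul_mod_self_left, Nat.mod_eq_of_lt hb2]
        have m2' : (r'.2 + 2 * ω.2.1 * s'.2) % (2 * ω.2.1) = r'.2 := by
          rw [Nat.add_mul_mod_self_left, Nat.mod_eq_of_lt hb2']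
        refine Prod.ext ?_ ?_
        · rw [← m1, ← m1', g1]
        · rw [← m2, ← m2', g2]
      have hsubZ : (R2.biUnion (fun r => (Zr r).image
          (fun s : ℕ × ℕ => (r.1 + 2 * ω.1 * s.1, r.2 + 2 * ω.2.1 * s.2)))) ⊆ Zf ω := by
        intro z hz
        obtain ⟨r, hr, hz2⟩ := Finset.mem_biUnion.mp hz
        obtain ⟨s, hs, hsz⟩ := Finset.mem_image.mp hz2
        have hsm := Finset.mem_filter.mp hs
        refine Finset.mem_filter.mpr ⟨?_, ?_⟩
        · rw [← hsz]
          exact Finset.mem_product.mpr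
            ⟨Finset.mem_range.mpr (by have := hsm.2.2.1; omega),
             Finset.mem_range.mpr (by have := hsm.2.2.2; omega)⟩
        · rw [← hsz]
          exact hsm.2.1
      calc ∑ r ∈ R2, (Zr r).card
          = ∑ r ∈ R2, ((Zr r).image
              (fun s : ℕ × ℕ => (r.1 + 2 * ω.1 * s.1, r.2 + 2 * ω.2.1 * s.2))).card :=
            Finset.sum_congr rfl (fun r hr => (Finset.card_image_of_injOn (hinj2 r hr)).symm)
        _ = (R2.biUnion (fun r => (Zr r).image
              (fun s : ℕ × ℕ => (r.1 + 2 * ω.1 * s.1, r.2 + 2 * ω.2.1 * s.2)))).card :=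
            (Finset.card_biUnion hdisj2).symm
        _ ≤ (Zf ω).card := Finset.card_le_card hsubZ
    omega
  -- cells of distinct roots are disjoint (synchronization)
  have hZfdisj : ∀ ω ∈ Om, ∀ ω' ∈ Om, ω ≠ ω' → Disjoint (Zf ω) (Zf ω') := by
    intro ω hω ω' hω' hne
    rw [Finset.disjoint_left]
    intro z hz hz'
    obtain ⟨c, hcS, hcω⟩ := hOmSpec ω hω
    obtain ⟨c', hcS', hcω'⟩ := hOmSpec ω' hω'
    obtain ⟨hab, hp2, hq2, hprim, hin, hjn, hocc, hceq⟩ := hG c hcS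
    obtain ⟨hab', hp2', hq2', hprim', hin', hjn', hocc', hceq'⟩ := hG c' hcS'
    have h0 : 0 < Gh c := hGh0 c hcS
    have w0 : 0 < Gw c := hGw0 c hcS
    have h0' : 0 < Gh c' := hGh0 c' hcS'
    have w0' : 0 < Gw c' := hGw0 c' hcS'
    have hTile : AuxTile A ω z.1 z.2 := (Finset.mem_filter.mp hz).2
    have hTile' : AuxTile A ω' z.1 z.2 := (Finset.mem_filter.mp hz').2
    rw [← hcω] at hTile
    rw [← hcω'] at hTile'
    have hT : ∀ x < 4 * Gh c, ∀ y < 4 * Gw c,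
        A (z.1 + x) (z.2 + y)
          = (fun x y => A (Gi c + x) (Gj c + y)) (x % Gh c) (y % Gw c) := by
      intro x hx y hy
      have this2 : (some (A (z.1 + x) (z.2 + y)) : Option σ)
          = if x % Gh c < Gh c ∧ y % Gw c < Gw c
            then some (A (Gi c + x % Gh c) (Gj c + y % Gw c)) else none := hTile x hx y hy
      rw [if_pos ⟨Nat.mod_lt _ h0, Nat.mod_lt _ w0⟩] at this2
      exact Option.some.inj this2
    have hT' : ∀ x < 4 * Gh c', ∀ y < 4 * Gw c',
        A (z.1 + x) (z.2 + y)
          = (fun x y => A (Gi c' + x) (Gj c' + y)) (x % Gh c') (y % Gw c') := by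
      intro x hx y hy
      have this2 : (some (A (z.1 + x) (z.2 + y)) : Option σ)
          = if x % Gh c' < Gh c' ∧ y % Gw c' < Gw c'
            then some (A (Gi c' + x % Gh c') (Gj c' + y % Gw c')) else none := hTile' x hx y hy
      rw [if_pos ⟨Nat.mod_lt _ h0', Nat.mod_lt _ w0'⟩] at this2
      exact Option.some.inj this2
    have hpowa : (2:ℕ)^(a+1) = 2 * 2^a := by rw [pow_succ]; ring
    have hpowb : (2:ℕ)^(b+1) = 2 * 2^b := by rw [pow_succ]; ring
    have hd1 : Gh c < 2 * Gh c' := by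
      have e1 := hab.2.1
      have e2 := hab'.1
      omega
    have hd2 : Gh c' < 2 * Gh c := by
      have e1 := hab'.2.1
      have e2 := hab.1
      omega
    have hd3 : Gw c < 2 * Gw c' := by
      have e1 := hab.2.2.2
      have e2 := hab'.2.2.1
      omega
    have hd4 : Gw c' < 2 * Gw c := by
      have e1 := hab'.2.2.2
      have e2 := hab.2.2.1
      omega
    obtain ⟨hh, hw2, hpat⟩ := aux_sync A z.1 z.2 (Gh c) (Gw c) (Gh c') (Gw c')
      (fun x y => A (Gi c + x) (Gj c + y)) (fun x y => A (Gi c' + x) (Gj c' + y))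
      hprim hprim' hd1 hd2 hd3 hd4 hT hT'
    apply hne
    rw [← hcω, ← hcω']
    refine Prod.ext hh (Prod.ext hw2 ?_)
    funext x y
    show (if x < Gh c ∧ y < Gw c then some (A (Gi c + x) (Gj c + y)) else none)
      = (if x < Gh c' ∧ y < Gw c' then some (A (Gi c' + x) (Gj c' + y)) else none)
    by_cases hxy : x < Gh c ∧ y < Gw c
    · rw [if_pos hxy, if_pos (by rw [← hh, ← hw2]; exact hxy)]
      exact congrArg some (hpat x hxy.1 y hxy.2)
    · rw [if_neg hxy, if_neg (by rw [← hh, ← hw2]; exact hxy)]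
  -- final count
  have hfinal : S.ncard ≤ (n + 1) * (n + 1) := by
    rw [hcard1, hcard2]
    calc ∑ ω ∈ Om, (T.filter (fun t => t.1 = ω)).card
        ≤ ∑ ω ∈ Om, (Zf ω).card := Finset.sum_le_sum hperω
      _ = (Om.biUnion Zf).card := (Finset.card_biUnion hZfdisj).symm
      _ ≤ U.card := Finset.card_le_card
          (Finset.biUnion_subset.mpr (fun ω _ => Finset.filter_subset _ _))
      _ = (n + 1) * (n + 1) := by rw [hUdef, Finset.card_product, Finset.card_range]
  calc S.ncard ≤ (n + 1) * (n + 1) := hfinal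
    _ ≤ 4 * (n + 1) ^ 2 := by nlinarith


end Formal
end

section
/- Let a and b be non-negative integers and let A be a 2D-string. There do not exist pairwise distinct primitive (a,b)-arrays W, W', W'' together with integers β, β', β'' ≥ 2 such that W^{2,2β}, (W')^{2,2β'} and (W'')^{2,2β''} all occur in A with the same top-left corner. -/
open scoped Classical

namespace Formal

variable {α : Type*}

private lemma tile_of_period {γ : Type*} (u : ℕ → γ) (n g : ℕ) (hg : 0 < g)
    (H : ∀ x, g ≤ x → x < n → u x = u (x - g)) : ∀ x, x < n → u x = u (x % g) := by
  intro x
  induction x using Nat.strong_induction_on with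
  | _ x ih =>
    intro hx
    by_cases hxg : x < g
    · rw [Nat.mod_eq_of_lt hxg]
    · push_neg at hxg
      rw [H x hxg hx, ih (x - g) (by omega) (by omega)]
      congr 1
      exact (Nat.mod_eq_sub_mod hxg).symm

private lemma exists_shift (c g t : ℕ) (hg : 0 < g) :
    ∃ m : ℕ, (t + m * c) % g = t % Nat.gcd c g := by
  set G := Nat.gcd c g with hGdef
  have hGpos : 0 < G := Nat.gcd_pos_of_pos_right c hg
  have hGg : G ∣ g := Nat.gcd_dvd_right c g
  have hbez : (G : ℤ) = c * Nat.gcdA c g + g * Nat.gcdB c g := Nat.gcd_eq_gcd_ab c g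
  set az : ℤ := Nat.gcdA c g with haz
  set bz : ℤ := Nat.gcdB c g with hbz
  set q : ℕ := t / G with hq
  set M : ℤ := (-az) * q with hM
  have hgz : ((g : ℤ)) ≠ 0 := by exact_mod_cast hg.ne'
  refine ⟨(M % g).toNat, ?_⟩
  have hmz : (((M % g).toNat : ℤ)) = M % g :=
    Int.toNat_of_nonneg (Int.emod_nonneg M hgz)
  have hdm : (G : ℤ) * q + ((t % G : ℕ) : ℤ) = t := by
    exact_mod_cast Nat.div_add_mod t G
  have e1 : Int.ModEq g ((M % g).toNat : ℤ) M := by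
    rw [hmz]; exact Int.emod_emod_of_dvd M dvd_rfl
  have e2 : Int.ModEq g ((t : ℤ) + ((M % g).toNat : ℤ) * c) ((t : ℤ) + M * c) :=
    Int.ModEq.add_left _ (e1.mul_right c)
  have e3 : (t : ℤ) + M * c = ((t % G : ℕ) : ℤ) + (g : ℤ) * (bz * q) := by
    rw [hM]
    linear_combination (-1 : ℤ) * hdm + (q : ℤ) * hbez
  have e4 : Int.ModEq g ((t : ℤ) + M * c) ((t % G : ℕ) : ℤ) := by
    rw [e3]
    unfold Int.ModEq
    apply Int.add_mul_emod_self_left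
  have key : ((t : ℤ) + ((M % g).toNat : ℤ) * c) % g = ((t % G : ℕ) : ℤ) % g := e2.trans e4
  have key2 : ((t + (M % g).toNat * c) % g : ℕ) = ((t % G) % g : ℕ) := by
    have := key
    rw [show ((t : ℤ) + ((M % g).toNat : ℤ) * c) = ((t + (M % g).toNat * c : ℕ) : ℤ) by push_cast; ring]
      at this
    rw [← Int.natCast_mod, ← Int.natCast_mod] at this
    exact_mod_cast this
  rw [key2]
  exact Nat.mod_eq_of_lt (lt_of_lt_of_le (Nat.mod_lt t hGpos) (Nat.le_of_dvd hg hGg))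

private lemma rot_tile {γ : Type*} (u : ℕ → γ) (g c : ℕ) (hg : 0 < g)
    (H : ∀ t, t < g → u t = u ((t + c) % g)) :
    ∀ t, t < g → u t = u (t % Nat.gcd c g) := by
  have iter : ∀ m t, t < g → u t = u ((t + m * c) % g) := by
    intro m
    induction m with
    | zero => intro t ht; simp [Nat.mod_eq_of_lt ht]
    | succ m ih =>
      intro t ht
      have h1 := ih t ht
      have h2 := H ((t + m * c) % g) (Nat.mod_lt _ hg)
      rw [Nat.mod_add_mod] at h2
      rw [h1, h2]
      congr 1
      ring_nf
  intro t ht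
  obtain ⟨m, hm⟩ := exists_shift c g t hg
  rw [iter m t ht, hm]

private lemma fw_aux {γ : Type*} (u : ℕ → γ) :
    ∀ N p q n, p + q ≤ N → 0 < p → 0 < q → p ≤ q → p + q ≤ n →
      (∀ x, x + p < n → u x = u (x + p)) →
      (∀ x, x + q < n → u x = u (x + q)) →
      ∀ x, x + Nat.gcd p q < n → u x = u (x + Nat.gcd p q) := by
  intro N
  induction N with
  | zero => intro p q n hN hp; omega
  | succ N ih =>
    intro p q n hN hp hq hpq hn Pp Pq x hx
    by_cases hEq : p = q
    · subst hEq
      rw [Nat.gcd_self] at hx ⊢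
      exact Pp x hx
    · have hlt : p < q := lt_of_le_of_ne hpq hEq
      -- periods p and q - p on window n - p
      have P1 : ∀ y, y + p < n - p → u y = u (y + p) := fun y hy => Pp y (by omega)
      have P2 : ∀ y, y + (q - p) < n - p → u y = u (y + (q - p)) := by
        intro y hy
        have h1 : u y = u (y + q) := Pq y (by omega)
        have h2 : u (y + (q - p)) = u (y + (q - p) + p) := Pp (y + (q - p)) (by omega)
        rw [show y + (q - p) + p = y + q by omega] at h2
        rw [h1, h2]
      have hgcd : Nat.gcd p (q - p) = Nat.gcd p q := by
        conv_rhs => rw [show q = (q - p) + p by omega]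
        rw [Nat.gcd_add_self_right]
      have key : ∀ y, y + Nat.gcd p q < n - p → u y = u (y + Nat.gcd p q) := by
        rcases le_total p (q - p) with hle | hle
        · intro y hy
          have := ih p (q - p) (n - p) (by omega) hp (by omega) hle (by omega) P1 P2 y
            (by rw [hgcd]; omega)
          rwa [hgcd] at this
        · intro y hy
          have := ih (q - p) p (n - p) (by omega) (by omega) hp hle (by omega) P2 P1 y
            (by rw [Nat.gcd_comm, hgcd]; omega)
          rwa [Nat.gcd_comm, hgcd] at this
      set G := Nat.gcd p q with hG
      have hGp : G ∣ p := Nat.gcd_dvd_left p q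
      have hGq : G ∣ q := Nat.gcd_dvd_right p q
      have hGpos : 0 < G := Nat.gcd_pos_of_pos_left q hp
      by_cases hwin : x + G < n - p
      · exact key x hwin
      · have hGqp : G ∣ q - p := Nat.dvd_sub hGq hGp
        have hGle : G ≤ q - p := Nat.le_of_dvd (by omega) hGqp
        have hxp : p ≤ x := by omega
        have c1 : u (x - p) = u (x - p + p) := Pp (x - p) (by omega)
        have c2 : u (x - p) = u (x - p + G) := key (x - p) (by omega)
        have c3 : u (x - p + G) = u (x - p + G + p) := Pp (x - p + G) (by omega)
        rw [show x - p + p = x by omega] at c1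
        rw [show x - p + G + p = x + G by omega] at c3
        rw [← c1, c2, c3]

private lemma fw_weak {γ : Type*} (u : ℕ → γ) (p q n : ℕ) (hp : 0 < p) (hq : 0 < q)
    (hn : p + q ≤ n)
    (Pp : ∀ x, x + p < n → u x = u (x + p))
    (Pq : ∀ x, x + q < n → u x = u (x + q)) :
    ∀ x, x + Nat.gcd p q < n → u x = u (x + Nat.gcd p q) := by
  rcases le_total p q with hle | hle
  · exact fw_aux u (p + q) p q n le_rfl hp hq hle hn Pp Pq
  · intro x hx
    have := fw_aux u (q + p) q p n le_rfl hq hp hle (by omega) Pq Pp x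
      (by rwa [Nat.gcd_comm])
    rwa [Nat.gcd_comm]


private lemma three_squares {γ : Type*} (S : ℕ → γ) (p1 p2 p3 : ℕ)
    (h0 : 0 < p1) (h12 : p1 < p2) (h23 : p2 < p3) (h31 : p3 < 2 * p1)
    (T1 : ∀ x, x < 2 * p1 → S x = S (x % p1))
    (T2 : ∀ x, x < 2 * p2 → S x = S (x % p2))
    (T3 : ∀ x, x < 2 * p3 → S x = S (x % p3))
    (hprim : ∀ p, 0 < p → p ∣ p1 → (∀ x, x < p1 → S x = S (x % p)) → p = p1) :
    False := by
  set e := p2 - p1 with he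
  set d := p3 - p2 with hd
  have he0 : 0 < e := by omega
  have hd0 : 0 < d := by omega
  have hf : e + d < p1 := by omega
  -- period e on [0, p1)
  have Pe : ∀ x, x + e < p1 → S x = S (x + e) := by
    intro x hx
    have t2 := T2 (x + p2) (by omega)
    rw [show (x + p2) % p2 = x from by
      rw [Nat.add_mod_right]; exact Nat.mod_eq_of_lt (by omega)] at t2
    have t1 := T1 (x + p2) (by omega)
    rw [show (x + p2) % p1 = x + e from by
      rw [show x + p2 = (x + e) + p1 by omega, Nat.add_mod_right]
      exact Nat.mod_eq_of_lt (by omega)] at t1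
    rw [← t2, t1]
  -- period d on [0, p1)
  have Pd : ∀ x, x + d < p1 → S x = S (x + d) := by
    intro x hx
    have t3 := T3 (x + p3) (by omega)
    rw [show (x + p3) % p3 = x from by
      rw [Nat.add_mod_right]; exact Nat.mod_eq_of_lt (by omega)] at t3
    have t2 := T2 (x + p3) (by omega)
    rw [show (x + p3) % p2 = x + d from by
      rw [show x + p3 = (x + d) + p2 by omega, Nat.add_mod_right]
      exact Nat.mod_eq_of_lt (by omega)] at t2
    rw [← t3, t2]
  -- period g = gcd e d
  set g := Nat.gcd e d with hgdef
  have hg0 : 0 < g := Nat.gcd_pos_of_pos_left d he0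
  have hge : g ≤ e := Nat.le_of_dvd he0 (Nat.gcd_dvd_left e d)
  have hgd : g ≤ d := Nat.le_of_dvd hd0 (Nat.gcd_dvd_right e d)
  have Pg : ∀ x, x + g < p1 → S x = S (x + g) :=
    fw_weak S e d p1 he0 hd0 (by omega) Pe Pd
  -- tiling by g on [0, p1)
  have Tg : ∀ x, x < p1 → S x = S (x % g) := by
    apply tile_of_period S p1 g hg0
    intro x hx1 hx2
    have := Pg (x - g) (by omega)
    rw [show x - g + g = x by omega] at this
    exact this.symm
  -- wrap relations
  set k := p1 - d with hk
  have hkd : k + d = p1 := by omega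
  have Wr : ∀ o, o < d → o < e → S (k + o) = S o := by
    intro o ho1 ho2
    have t3 := T3 (k + o + p3) (by omega)
    rw [show (k + o + p3) % p3 = k + o from by
      rw [Nat.add_mod_right]; exact Nat.mod_eq_of_lt (by omega)] at t3
    have t2 := T2 (k + o + p3) (by omega)
    rw [show (k + o + p3) % p2 = p1 + o from by
      rw [show k + o + p3 = (p1 + o) + p2 by omega, Nat.add_mod_right]
      exact Nat.mod_eq_of_lt (by omega)] at t2
    have t1 := T1 (p1 + o) (by omega)
    rw [show (p1 + o) % p1 = o from by
      rw [show p1 + o = o + p1 by omega, Nat.add_mod_right]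
      exact Nat.mod_eq_of_lt (by omega)] at t1
    rw [← t3, t2, t1]
  -- rotation relation
  set r := k % g with hr
  have hrg : r < g := Nat.mod_lt k hg0
  set c := (g - r) % g with hc
  have Hrot : ∀ t, t < g → S t = S ((t + c) % g) := by
    intro t ht
    set o := (t + c) % g with ho
    have hog : o < g := Nat.mod_lt _ hg0
    have hs : (k + o) % g = t := by
      rw [Nat.add_mod k o g, Nat.mod_eq_of_lt hog, ← hr, ho, hc,
        Nat.add_mod_mod, ← Nat.add_assoc, Nat.add_mod_mod,
        show r + t + (g - r) = t + g by omega, Nat.add_mod_right]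
      exact Nat.mod_eq_of_lt ht
    have h1 : S (k + o) = S ((k + o) % g) := Tg (k + o) (by omega)
    have h2 : S (k + o) = S o := Wr o (by omega) (by omega)
    rw [← hs, ← h1, h2]
  -- conclude tiling by G2 = gcd c g
  set G2 := Nat.gcd c g with hG2
  have hG2g : G2 ∣ g := Nat.gcd_dvd_right c g
  have hG2pos : 0 < G2 := Nat.gcd_pos_of_pos_right c hg0
  have hG2le : G2 ≤ g := Nat.le_of_dvd hg0 hG2g
  have Rt : ∀ t, t < g → S t = S (t % G2) := rot_tile S g c hg0 Hrot
  -- G2 divides p1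
  have hG2r : G2 ∣ r := by
    by_cases hr0 : r = 0
    · rw [hr0]; exact dvd_zero _
    · have hcval : c = g - r := by rw [hc]; exact Nat.mod_eq_of_lt (by omega)
      have h1 : G2 ∣ c := Nat.gcd_dvd_left c g
      have := Nat.dvd_sub hG2g (hcval ▸ h1)
      rwa [show g - (g - r) = r by omega] at this
  have hG2k : G2 ∣ k := by
    have h1 : G2 ∣ g * (k / g) := Dvd.dvd.mul_right hG2g _
    have h2 := Nat.dvd_add h1 (hr ▸ hG2r)
    rwa [Nat.div_add_mod k g] at h2
  have hG2d : G2 ∣ d := hG2g.trans (Nat.gcd_dvd_right e d)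
  have hG2p1 : G2 ∣ p1 := hkd ▸ Nat.dvd_add hG2k hG2d
  -- final tiling
  have Tfin : ∀ x, x < p1 → S x = S (x % G2) := by
    intro x hx
    rw [Tg x hx, Rt (x % g) (Nat.mod_lt x hg0), Nat.mod_mod_of_dvd x hG2g]
  have := hprim G2 hG2pos hG2p1 Tfin
  omega

private lemma width_rot {γ : Type*} (R : ℕ → γ) (w w' : ℕ) (hw : 0 < w) (hle : w ≤ w')
    (H1 : ∀ y, y < 2 * w' → R y = R (y % w))
    (H2 : ∀ y, y < 2 * w' → R y = R (y % w')) :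
    ∀ t, t < w → R t = R (t % Nat.gcd (w' % w) w) := by
  apply rot_tile R w (w' % w) hw
  intro t ht
  have h1 : R (t + w') = R t := by
    rw [H2 (t + w') (by omega), Nat.add_mod_right]
    congr 1
    exact Nat.mod_eq_of_lt (by omega)
  have h2 : R (t + w') = R ((t + w' % w) % w) := by
    rw [H1 (t + w') (by omega), Nat.add_mod_mod]
  rw [← h1, h2]


private lemma occ_entry {τ : Type*} (A : ℕ → ℕ → τ) (i j : ℕ) (W : ℕ → ℕ → τ)
    (h w B : ℕ) (hB : 1 ≤ B) (occ : OccAt A i j W h w 2 B) :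
    ∀ x, x < h → ∀ y, y < w → W x y = A (i + x) (j + y) := by
  intro x hx y hy
  have hyB : y < B * w := lt_of_lt_of_le hy (Nat.le_mul_of_pos_left w hB)
  have := occ x (by omega) y hyB
  rw [Nat.mod_eq_of_lt hx, Nat.mod_eq_of_lt hy] at this
  exact this.symm

private lemma occ_htile {τ : Type*} (A : ℕ → ℕ → τ) (i j : ℕ) (W : ℕ → ℕ → τ)
    (h w B : ℕ) (hw : 0 < w) (occ : OccAt A i j W h w 2 B) :
    ∀ x, x < 2 * h → ∀ y, y < B * w → A (i + x) (j + y) = A (i + x) (j + y % w) := by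
  intro x hx y hy
  have h1 := occ x hx y hy
  have h2 := occ x hx (y % w) (lt_of_lt_of_le (Nat.mod_lt y hw)
    (Nat.le_mul_of_pos_left w (by
      rcases Nat.eq_zero_or_pos B with hB | hB
      · subst hB; omega
      · exact hB)))
  rw [Nat.mod_eq_of_lt (Nat.mod_lt y hw)] at h2
  rw [h1, h2]

private lemma occ_vtile {τ : Type*} (A : ℕ → ℕ → τ) (i j : ℕ) (W : ℕ → ℕ → τ)
    (h w B : ℕ) (hh : 0 < h) (occ : OccAt A i j W h w 2 B) :
    ∀ x, x < 2 * h → ∀ y, y < B * w → A (i + x) (j + y) = A (i + x % h) (j + y) := by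
  intro x hx y hy
  have h1 := occ x hx y hy
  have h2 := occ (x % h) (by have := Nat.mod_lt x hh; omega) y hy
  rw [Nat.mod_mod_of_dvd x dvd_rfl] at h2
  rw [h1, h2]

private lemma width_eq_aux {τ : Type*} (A : ℕ → ℕ → τ) (i j : ℕ) (W W' : ℕ → ℕ → τ)
    (h w h' w' b : ℕ)
    (pW : PrimitiveA W h w) (pW' : PrimitiveA W' h' w')
    (hw2 : w < 2 ^ (b + 1)) (hw1' : 2 ^ b ≤ w') (hw2' : w' < 2 ^ (b + 1))
    (hhh' : h < 2 * h') (hh'h : h' < 2 * h)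
    (E : ∀ x, x < h → ∀ y, y < w → W x y = A (i + x) (j + y))
    (E' : ∀ x, x < h' → ∀ y, y < w' → W' x y = A (i + x) (j + y))
    (H : ∀ x, x < 2 * h → ∀ y, y < 4 * 2 ^ b → A (i + x) (j + y) = A (i + x) (j + y % w))
    (H' : ∀ x, x < 2 * h' → ∀ y, y < 4 * 2 ^ b → A (i + x) (j + y) = A (i + x) (j + y % w'))
    (hle : w ≤ w') : w = w' := by
  obtain ⟨hh0, hw0, prim⟩ := pW
  obtain ⟨hh0', hw0', prim'⟩ := pW'
  have hp : (2 : ℕ) ^ (b + 1) = 2 * 2 ^ b := by rw [pow_succ]; ring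
  by_cases hk : w' % w = 0
  · -- w divides w'
    have hdvd : w ∣ w' := Nat.dvd_of_mod_eq_zero hk
    have til : ∀ x, x < h' → ∀ y, y < w' → W' x y = W' (x % h') (y % w) := by
      intro x hx y hy
      rw [Nat.mod_eq_of_lt hx]
      rw [E' x hx y hy, H x (by omega) y (by omega),
        ← E' x hx (y % w) (lt_of_lt_of_le (Nat.mod_lt y hw0) hle)]
    exact (prim' h' w hh0' hw0 dvd_rfl hdvd til).2
  · have hkpos : 0 < w' % w := Nat.pos_of_ne_zero hk
    set G := Nat.gcd (w' % w) w with hG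
    have hGw : G ∣ w := Nat.gcd_dvd_right _ _
    have hGpos : 0 < G := Nat.gcd_pos_of_pos_right _ hw0
    have hGlt : G < w := lt_of_le_of_lt (Nat.gcd_le_left w hkpos) (Nat.mod_lt w' hw0)
    have til : ∀ x, x < h → ∀ y, y < w → W x y = W (x % h) (y % G) := by
      intro x hx y hy
      rw [Nat.mod_eq_of_lt hx]
      have rot := width_rot (fun y => A (i + x) (j + y)) w w' hw0 hle
        (fun y hy => H x (by omega) y (by omega))
        (fun y hy => H' x (by omega) y (by omega)) y hy
      rw [E x hx y hy, rot, ← E x hx (y % G) (lt_of_lt_of_le (Nat.mod_lt y hGpos) (by omega))]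
    have := (prim h G hh0 hGpos dvd_rfl hGw til).2
    omega

private lemma width_eq {τ : Type*} (A : ℕ → ℕ → τ) (i j : ℕ) (W W' : ℕ → ℕ → τ)
    (h w h' w' b : ℕ)
    (pW : PrimitiveA W h w) (pW' : PrimitiveA W' h' w')
    (hw1 : 2 ^ b ≤ w) (hw2 : w < 2 ^ (b + 1)) (hw1' : 2 ^ b ≤ w') (hw2' : w' < 2 ^ (b + 1))
    (hhh' : h < 2 * h') (hh'h : h' < 2 * h)
    (E : ∀ x, x < h → ∀ y, y < w → W x y = A (i + x) (j + y))
    (E' : ∀ x, x < h' → ∀ y, y < w' → W' x y = A (i + x) (j + y))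
    (H : ∀ x, x < 2 * h → ∀ y, y < 4 * 2 ^ b → A (i + x) (j + y) = A (i + x) (j + y % w))
    (H' : ∀ x, x < 2 * h' → ∀ y, y < 4 * 2 ^ b → A (i + x) (j + y) = A (i + x) (j + y % w')) :
    w = w' := by
  rcases le_total w w' with hle | hle
  · exact width_eq_aux A i j W W' h w h' w' b pW pW' hw2 hw1' hw2' hhh' hh'h E E' H H' hle
  · exact (width_eq_aux A i j W' W h' w' h w b pW' pW hw2' hw1 hw2 hh'h hhh' E' E H' H hle).symm


/-- There do not exist pairwise distinct primitive `(a,b)`-arrays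
`W`, `W'`, `W''` and integers `β, β', β'' ≥ 2` such that `W^{2,2β}`, `(W')^{2,2β'}`
and `(W'')^{2,2β''}` all occur in the `m × n` 2D-string `A` with the same top-left
corner. -/
theorem no_three_thin_quartics_same_corner {τ : Type*} (a b m n : ℕ)
    (A : ℕ → ℕ → τ) :
    ¬ ∃ (W W' W'' : ℕ → ℕ → τ) (h w h' w' h'' w'' β β' β'' i j : ℕ),
        PrimitiveA W h w ∧ PrimitiveA W' h' w' ∧ PrimitiveA W'' h'' w'' ∧
        IsABDims a b h w ∧ IsABDims a b h' w' ∧ IsABDims a b h'' w'' ∧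
        ¬ ArrEq W h w W' h' w' ∧ ¬ ArrEq W h w W'' h'' w'' ∧
        ¬ ArrEq W' h' w' W'' h'' w'' ∧
        2 ≤ β ∧ 2 ≤ β' ∧ 2 ≤ β'' ∧
        i + 2 * h ≤ m ∧ j + 2 * β * w ≤ n ∧ OccAt A i j W h w 2 (2 * β) ∧
        i + 2 * h' ≤ m ∧ j + 2 * β' * w' ≤ n ∧ OccAt A i j W' h' w' 2 (2 * β') ∧
        i + 2 * h'' ≤ m ∧ j + 2 * β'' * w'' ≤ n ∧ OccAt A i j W'' h'' w'' 2 (2 * β'') := by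
  rintro ⟨W, W', W'', h, w, h', w', h'', w'', β, β', β'', i, j,
    pW, pW', pW'', dW, dW', dW'', ne1, ne2, ne3, hβ, hβ', hβ'', -, -, occ, -, -, occ', -, -, occ''⟩
  obtain ⟨ha1, ha2, hb1, hb2⟩ := dW
  obtain ⟨ha1', ha2', hb1', hb2'⟩ := dW'
  obtain ⟨ha1'', ha2'', hb1'', hb2''⟩ := dW''
  have hh0 : 0 < h := pW.1
  have hw0 : 0 < w := pW.2.1
  have hh0' : 0 < h' := pW'.1
  have hw0' : 0 < w' := pW'.2.1
  have hh0'' : 0 < h'' := pW''.1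
  have hw0'' : 0 < w'' := pW''.2.1
  have hpa : (2 : ℕ) ^ (a + 1) = 2 * 2 ^ a := by rw [pow_succ]; ring
  have hpb : (2 : ℕ) ^ (b + 1) = 2 * 2 ^ b := by rw [pow_succ]; ring
  have E := occ_entry A i j W h w (2 * β) (by omega) occ
  have E' := occ_entry A i j W' h' w' (2 * β') (by omega) occ'
  have E'' := occ_entry A i j W'' h'' w'' (2 * β'') (by omega) occ''
  have h4b : 4 * 2 ^ b ≤ 2 * β * w :=
    le_trans (Nat.mul_le_mul_right _ (by omega)) (Nat.mul_le_mul_left (2 * β) hb1)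
  have h4b' : 4 * 2 ^ b ≤ 2 * β' * w' :=
    le_trans (Nat.mul_le_mul_right _ (by omega)) (Nat.mul_le_mul_left (2 * β') hb1')
  have h4b'' : 4 * 2 ^ b ≤ 2 * β'' * w'' :=
    le_trans (Nat.mul_le_mul_right _ (by omega)) (Nat.mul_le_mul_left (2 * β'') hb1'')
  have H : ∀ x, x < 2 * h → ∀ y, y < 4 * 2 ^ b →
      A (i + x) (j + y) = A (i + x) (j + y % w) :=
    fun x hx y hy => occ_htile A i j W h w (2 * β) hw0 occ x hx y (lt_of_lt_of_le hy h4b)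
  have H' : ∀ x, x < 2 * h' → ∀ y, y < 4 * 2 ^ b →
      A (i + x) (j + y) = A (i + x) (j + y % w') :=
    fun x hx y hy => occ_htile A i j W' h' w' (2 * β') hw0' occ' x hx y (lt_of_lt_of_le hy h4b')
  have H'' : ∀ x, x < 2 * h'' → ∀ y, y < 4 * 2 ^ b →
      A (i + x) (j + y) = A (i + x) (j + y % w'') :=
    fun x hx y hy =>
      occ_htile A i j W'' h'' w'' (2 * β'') hw0'' occ'' x hx y (lt_of_lt_of_le hy h4b'')
  have wEq1 : w = w' :=
    width_eq A i j W W' h w h' w' b pW pW' hb1 hb2 hb1' hb2' (by omega) (by omega) E E' H H'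
  have wEq2 : w = w'' :=
    width_eq A i j W W'' h w h'' w'' b pW pW'' hb1 hb2 hb1'' hb2'' (by omega) (by omega)
      E E'' H H''
  subst wEq1
  subst wEq2
  have hne12 : h ≠ h' := by
    intro hEq
    exact ne1 ⟨hEq, rfl, fun x hx y hy => by rw [E x hx y hy, E' x (by omega) y hy]⟩
  have hne13 : h ≠ h'' := by
    intro hEq
    exact ne2 ⟨hEq, rfl, fun x hx y hy => by rw [E x hx y hy, E'' x (by omega) y hy]⟩
  have hne23 : h' ≠ h'' := by
    intro hEq
    exact ne3 ⟨hEq, rfl, fun x hx y hy => by rw [E' x hx y hy, E'' x (by omega) y hy]⟩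
  set S : ℕ → ℕ → Option τ := fun x y => if y < w then some (A (i + x) (j + y)) else none
    with hS
  have V := occ_vtile A i j W h w (2 * β) hh0 occ
  have V' := occ_vtile A i j W' h' w (2 * β') hh0' occ'
  have V'' := occ_vtile A i j W'' h'' w (2 * β'') hh0'' occ''
  have TS1 : ∀ x, x < 2 * h → S x = S (x % h) := by
    intro x hx
    funext y
    by_cases hy : y < w
    · simp only [hS, if_pos hy]
      exact congrArg some (V x hx y (lt_of_lt_of_le hy (Nat.le_mul_of_pos_left w (by omega))))
    · simp only [hS, if_neg hy]
  have TS2 : ∀ x, x < 2 * h' → S x = S (x % h') := by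
    intro x hx
    funext y
    by_cases hy : y < w
    · simp only [hS, if_pos hy]
      exact congrArg some (V' x hx y (lt_of_lt_of_le hy (Nat.le_mul_of_pos_left w (by omega))))
    · simp only [hS, if_neg hy]
  have TS3 : ∀ x, x < 2 * h'' → S x = S (x % h'') := by
    intro x hx
    funext y
    by_cases hy : y < w
    · simp only [hS, if_pos hy]
      exact congrArg some (V'' x hx y (lt_of_lt_of_le hy (Nat.le_mul_of_pos_left w (by omega))))
    · simp only [hS, if_neg hy]
  have PS1 : ∀ p, 0 < p → p ∣ h → (∀ x, x < h → S x = S (x % p)) → p = h := by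
    intro p hp hdvd Ht
    refine (pW.2.2 p w hp hw0 hdvd dvd_rfl ?_).1
    intro x hx y hy
    have hxp : x % p < h := lt_of_lt_of_le (Nat.mod_lt x hp) (Nat.le_of_dvd hh0 hdvd)
    have hkey := congrFun (Ht x hx) y
    simp only [hS, if_pos hy] at hkey
    have key : A (i + x) (j + y) = A (i + x % p) (j + y) := Option.some.inj hkey
    rw [Nat.mod_eq_of_lt hy, E x hx y hy, key, ← E (x % p) hxp y hy]
  have PS2 : ∀ p, 0 < p → p ∣ h' → (∀ x, x < h' → S x = S (x % p)) → p = h' := by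
    intro p hp hdvd Ht
    refine (pW'.2.2 p w hp hw0 hdvd dvd_rfl ?_).1
    intro x hx y hy
    have hxp : x % p < h' := lt_of_lt_of_le (Nat.mod_lt x hp) (Nat.le_of_dvd hh0' hdvd)
    have hkey := congrFun (Ht x hx) y
    simp only [hS, if_pos hy] at hkey
    have key : A (i + x) (j + y) = A (i + x % p) (j + y) := Option.some.inj hkey
    rw [Nat.mod_eq_of_lt hy, E' x hx y hy, key, ← E' (x % p) hxp y hy]
  have PS3 : ∀ p, 0 < p → p ∣ h'' → (∀ x, x < h'' → S x = S (x % p)) → p = h'' := by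
    intro p hp hdvd Ht
    refine (pW''.2.2 p w hp hw0 hdvd dvd_rfl ?_).1
    intro x hx y hy
    have hxp : x % p < h'' := lt_of_lt_of_le (Nat.mod_lt x hp) (Nat.le_of_dvd hh0'' hdvd)
    have hkey := congrFun (Ht x hx) y
    simp only [hS, if_pos hy] at hkey
    have key : A (i + x) (j + y) = A (i + x % p) (j + y) := Option.some.inj hkey
    rw [Nat.mod_eq_of_lt hy, E'' x hx y hy, key, ← E'' (x % p) hxp y hy]
  have F : ∀ q1 q2 q3 : ℕ,
      0 < q1 → q1 < q2 → q2 < q3 → q3 < 2 * q1 →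
      (∀ x, x < 2 * q1 → S x = S (x % q1)) → (∀ x, x < 2 * q2 → S x = S (x % q2)) →
      (∀ x, x < 2 * q3 → S x = S (x % q3)) →
      (∀ p, 0 < p → p ∣ q1 → (∀ x, x < q1 → S x = S (x % p)) → p = q1) → False :=
    fun q1 q2 q3 a1 a2 a3 a4 b1 b2 b3 b4 => three_squares S q1 q2 q3 a1 a2 a3 a4 b1 b2 b3 b4
  rcases lt_trichotomy h h' with c1 | c1 | c1
  · rcases lt_trichotomy h' h'' with c2 | c2 | c2
    · exact F h h' h'' hh0 c1 c2 (by omega) TS1 TS2 TS3 PS1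
    · exact absurd c2 hne23
    · rcases lt_trichotomy h h'' with c3 | c3 | c3
      · exact F h h'' h' hh0 c3 c2 (by omega) TS1 TS3 TS2 PS1
      · exact absurd c3 hne13
      · exact F h'' h h' hh0'' c3 c1 (by omega) TS3 TS1 TS2 PS3
  · exact absurd c1 hne12
  · rcases lt_trichotomy h h'' with c2 | c2 | c2
    · exact F h' h h'' hh0' c1 c2 (by omega) TS2 TS1 TS3 PS2
    · exact absurd c2 hne13
    · rcases lt_trichotomy h' h'' with c3 | c3 | c3
      · exact F h' h'' h hh0' c3 c2 (by omega) TS2 TS3 TS1 PS2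
      · exact absurd c3 hne23
      · exact F h'' h' h hh0'' c3 c1 (by omega) TS3 TS2 TS1 PS3

end Formal
end

section
/- Every occurrence of a quartic in a 2D-string A is induced by a 2D-run: if W is an array of height h and width w and W^{2,2} occurs in A as the subarray A[i..i+2h−1, j..j+2w−1], then there exists a 2D-run R = A[i1..i2, j1..j2] of A with i1 ≤ i, i+2h−1 ≤ i2, j1 ≤ j and j+2w−1 ≤ j2, such that hper(R) divides w and vper(R) divides h. -/
open scoped Classical

namespace Formal

variable {α : Type*}

/-! ### Auxiliary lemmas for Statement 14 -/

private lemma per_sub' {τ : Type*} (f : ℕ → τ) (c p q : ℕ)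
    (hpq : p ≤ q) (hc : p + q ≤ c)
    (hp : ∀ y, y + p < c → f y = f (y + p))
    (hq : ∀ y, y + q < c → f y = f (y + q)) :
    ∀ y, y + (q - p) < c → f y = f (y + (q - p)) := by
  intro y hy
  by_cases hcase : y + q < c
  · have h1 := hq y hcase
    have h2 := hp (y + (q - p)) (by omega)
    rw [h1, h2]; congr 1; omega
  · have h1 := hp (y - p) (by omega)
    have h2 := hq (y - p) (by omega)
    have e1 : y - p + p = y := by omega
    have e2 : y - p + q = y + (q - p) := by omega
    rw [e1] at h1; rw [e2] at h2
    rw [← h1, h2]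

private lemma per_gcd' {τ : Type*} (f : ℕ → τ) (c : ℕ) :
    ∀ N p q, p + q ≤ N → 0 < p → 0 < q → p + q ≤ c →
    (∀ y, y + p < c → f y = f (y + p)) →
    (∀ y, y + q < c → f y = f (y + q)) →
    ∀ y, y + Nat.gcd p q < c → f y = f (y + Nat.gcd p q) := by
  intro N
  induction N with
  | zero => intro p q hN hp hq; omega
  | succ N ih =>
    intro p q hN hp hq hc hfp hfq
    rcases lt_trichotomy p q with hlt | heq | hgt
    · have hsub := per_sub' f c p q (le_of_lt hlt) hc hfp hfq
      have hg : Nat.gcd p (q - p) = Nat.gcd p q := Nat.gcd_sub_self_right (le_of_lt hlt)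
      have := ih p (q - p) (by omega) hp (by omega) (by omega) hfp hsub
      rwa [hg] at this
    · subst heq
      rwa [Nat.gcd_self]
    · have hsub := per_sub' f c q p (le_of_lt hgt) (by omega) hfq hfp
      have hg : Nat.gcd q (p - q) = Nat.gcd q p := Nat.gcd_sub_self_right (le_of_lt hgt)
      have := ih q (p - q) (by omega) hq (by omega) (by omega) hfq hsub
      rw [hg, Nat.gcd_comm] at this
      exact this

private lemma hperiod_gcd {τ : Type*} (A : ℕ → ℕ → τ) (i j r c p q : ℕ)
    (hp : 0 < p) (hq : 0 < q) (hc : p + q ≤ c)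
    (h1 : HPeriod A i j r c p) (h2 : HPeriod A i j r c q) :
    HPeriod A i j r c (Nat.gcd p q) := by
  intro x hx y hy
  exact per_gcd' (fun y => A (i + x) (j + y)) c (p + q) p q le_rfl hp hq hc
    (fun y hy => h1 x hx y hy) (fun y hy => h2 x hx y hy) y hy

private lemma vperiod_gcd {τ : Type*} (A : ℕ → ℕ → τ) (i j r c p q : ℕ)
    (hp : 0 < p) (hq : 0 < q) (hr : p + q ≤ r)
    (h1 : VPeriod A i j r c p) (h2 : VPeriod A i j r c q) :
    VPeriod A i j r c (Nat.gcd p q) := by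
  intro y hy x hx
  exact per_gcd' (fun x => A (i + x) (j + y)) r (p + q) p q le_rfl hp hq hr
    (fun x hx => h1 y hy x hx) (fun x hx => h2 y hy x hx) x hx

private lemma hperiod_dvd {τ : Type*} (A : ℕ → ℕ → τ) (i j r c p m : ℕ)
    (hdvd : p ∣ m) (h : HPeriod A i j r c p) : HPeriod A i j r c m := by
  obtain ⟨k, rfl⟩ := hdvd
  induction k with
  | zero => intro x hx y hy; simp
  | succ k ih =>
    intro x hx y hy
    have hmul : p * k ≤ p * (k + 1) := Nat.mul_le_mul_left _ (Nat.le_succ _)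
    rw [Nat.mul_succ] at hy
    have h1 := ih x hx y (by omega)
    have h2 := h x hx (y + p * k) (by omega)
    rw [h1, h2]; congr 1; ring

private lemma vperiod_dvd {τ : Type*} (A : ℕ → ℕ → τ) (i j r c p m : ℕ)
    (hdvd : p ∣ m) (h : VPeriod A i j r c p) : VPeriod A i j r c m := by
  obtain ⟨k, rfl⟩ := hdvd
  induction k with
  | zero => intro y hy x hx; simp
  | succ k ih =>
    intro y hy x hx
    have hmul : p * k ≤ p * (k + 1) := Nat.mul_le_mul_left _ (Nat.le_succ _)
    rw [Nat.mul_succ] at hx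
    have h1 := ih y hy x (by omega)
    have h2 := h y hy (x + p * k) (by omega)
    rw [h1, h2]; congr 1; ring

private lemma hper_spec {τ : Type*} (A : ℕ → ℕ → τ) (i j r c : ℕ) :
    0 < hper A i j r c ∧ HPeriod A i j r c (hper A i j r c) := by
  have hne : {p | 0 < p ∧ HPeriod A i j r c p}.Nonempty :=
    ⟨c + 1, by omega, fun x hx y hy => absurd hy (by omega)⟩
  exact Nat.sInf_mem hne

private lemma vper_spec {τ : Type*} (A : ℕ → ℕ → τ) (i j r c : ℕ) :
    0 < vper A i j r c ∧ VPeriod A i j r c (vper A i j r c) := by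
  have hne : {q | 0 < q ∧ VPeriod A i j r c q}.Nonempty :=
    ⟨r + 1, by omega, fun y hy x hx => absurd hx (by omega)⟩
  exact Nat.sInf_mem hne

/-- The window is "good": it contains the quartic occurrence, fits in `A`, and has
`w` as a horizontal and `h` as a vertical period. -/
private def Good2 {τ : Type*} (A : ℕ → ℕ → τ) (n i j h w i1 i2 j1 j2 : ℕ) : Prop :=
  i1 ≤ i ∧ i + 2 * h ≤ i2 + 1 ∧ j1 ≤ j ∧ j + 2 * w ≤ j2 + 1 ∧ i2 < n ∧ j2 < n ∧
  HPeriod A i1 j1 (i2 - i1 + 1) (j2 - j1 + 1) w ∧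
  VPeriod A i1 j1 (i2 - i1 + 1) (j2 - j1 + 1) h

/-- In a good window, the smallest horizontal period divides `w` and the smallest
vertical period divides `h`. -/
private lemma good_dvd {τ : Type*} {A : ℕ → ℕ → τ} {n i j h w i1 i2 j1 j2 : ℕ}
    (hh : 0 < h) (hw : 0 < w) (hg : Good2 A n i j h w i1 i2 j1 j2) :
    hper A i1 j1 (i2 - i1 + 1) (j2 - j1 + 1) ∣ w ∧
    vper A i1 j1 (i2 - i1 + 1) (j2 - j1 + 1) ∣ h := by
  obtain ⟨h1, h2, h3, h4, h5, h6, hH, hV⟩ := hg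
  constructor
  · set p := hper A i1 j1 (i2 - i1 + 1) (j2 - j1 + 1) with hp
    obtain ⟨hp0, hpP⟩ := hper_spec A i1 j1 (i2 - i1 + 1) (j2 - j1 + 1)
    have hple : p ≤ w := Nat.sInf_le ⟨hw, hH⟩
    have hc : 2 * w ≤ j2 - j1 + 1 := by omega
    have hgcd : HPeriod A i1 j1 (i2 - i1 + 1) (j2 - j1 + 1) (Nat.gcd p w) :=
      hperiod_gcd A i1 j1 _ _ p w hp0 hw (by omega) hpP hH
    have hgle : p ≤ Nat.gcd p w := Nat.sInf_le ⟨Nat.gcd_pos_of_pos_left w hp0, hgcd⟩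
    have : Nat.gcd p w = p := le_antisymm (Nat.le_of_dvd hp0 (Nat.gcd_dvd_left _ _)) hgle
    rw [← this]; exact Nat.gcd_dvd_right _ _
  · set q := vper A i1 j1 (i2 - i1 + 1) (j2 - j1 + 1) with hq
    obtain ⟨hq0, hqP⟩ := vper_spec A i1 j1 (i2 - i1 + 1) (j2 - j1 + 1)
    have hqle : q ≤ h := Nat.sInf_le ⟨hh, hV⟩
    have hr : 2 * h ≤ i2 - i1 + 1 := by omega
    have hgcd : VPeriod A i1 j1 (i2 - i1 + 1) (j2 - j1 + 1) (Nat.gcd q h) :=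
      vperiod_gcd A i1 j1 _ _ q h hq0 hh (by omega) hqP hV
    have hgle : q ≤ Nat.gcd q h := Nat.sInf_le ⟨Nat.gcd_pos_of_pos_left h hq0, hgcd⟩
    have : Nat.gcd q h = q := le_antisymm (Nat.le_of_dvd hq0 (Nat.gcd_dvd_left _ _)) hgle
    rw [← this]; exact Nat.gcd_dvd_right _ _

/-- Every occurrence of a quartic in an `n × n` 2D-string `A` is
induced by a 2D-run: if `W^{2,2}` (with `W` of height `h` and width `w`) occurs as
the subarray `A[i..i+2h−1, j..j+2w−1]`, then there is a 2D-run
`R = A[i1..i2, j1..j2]` containing this occurrence with `hper(R) ∣ w` and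
`vper(R) ∣ h`. -/
theorem quartic_induced_by_run {τ : Type*} (A : ℕ → ℕ → τ) (n i j h w : ℕ)
    (hh : 0 < h) (hw : 0 < w) (hbi : i + 2 * h ≤ n) (hbj : j + 2 * w ≤ n)
    (ho : OccPow A i j h w 2 2) :
    ∃ i1 i2 j1 j2, IsRun2D A n i1 i2 j1 j2 ∧
      i1 ≤ i ∧ i + 2 * h ≤ i2 + 1 ∧ j1 ≤ j ∧ j + 2 * w ≤ j2 + 1 ∧
      hper A i1 j1 (i2 - i1 + 1) (j2 - j1 + 1) ∣ w ∧
      vper A i1 j1 (i2 - i1 + 1) (j2 - j1 + 1) ∣ h := by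
  classical
  -- the initial good window is the quartic occurrence itself
  have hinit : Good2 A n i j h w i (i + 2 * h - 1) j (j + 2 * w - 1) := by
    have e1 : i + 2 * h - 1 - i + 1 = 2 * h := by omega
    have e2 : j + 2 * w - 1 - j + 1 = 2 * w := by omega
    refine ⟨le_rfl, by omega, le_rfl, by omega, by omega, by omega, ?_, ?_⟩
    · rw [e1, e2]
      intro x hx y hy
      rw [ho x (by omega) y (by omega), ho x (by omega) (y + w) (by omega),
        Nat.add_mod_right]
    · rw [e1, e2]
      intro y hy x hx
      rw [ho x (by omega) y (by omega), ho (x + h) (by omega) y (by omega),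
        Nat.add_mod_right]
  -- take a good window of maximal total size
  set S : Set ℕ := {k | ∃ i1 i2 j1 j2, Good2 A n i j h w i1 i2 j1 j2 ∧
    (i - i1) + i2 + (j - j1) + j2 = k} with hSdef
  have hSne : S.Nonempty := ⟨_, i, i + 2 * h - 1, j, j + 2 * w - 1, hinit, rfl⟩
  have hSbdd : BddAbove S := by
    refine ⟨i + j + 2 * n, ?_⟩
    rintro k ⟨i1, i2, j1, j2, ⟨g1, g2, g3, g4, g5, g6, _, _⟩, rfl⟩
    omega
  obtain ⟨i1, i2, j1, j2, hgood, hmeas⟩ := Nat.sSup_mem hSne hSbdd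
  have hmax : ∀ a b c d, Good2 A n i j h w a b c d →
      (i - a) + b + (j - c) + d ≤ sSup S :=
    fun a b c d hg => le_csSup hSbdd ⟨a, b, c, d, hg, rfl⟩
  obtain ⟨hdvdw, hdvdh⟩ := good_dvd hh hw hgood
  obtain ⟨g1, g2, g3, g4, g5, g6, gH, gV⟩ := hgood
  have hp_le : hper A i1 j1 (i2 - i1 + 1) (j2 - j1 + 1) ≤ w := Nat.le_of_dvd hw hdvdw
  have hq_le : vper A i1 j1 (i2 - i1 + 1) (j2 - j1 + 1) ≤ h := Nat.le_of_dvd hh hdvdh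
  have hcw : 2 * w ≤ j2 - j1 + 1 := by omega
  have hrh : 2 * h ≤ i2 - i1 + 1 := by omega
  -- maximality in each of the four directions
  have hup : 0 < i1 →
      pers A (i1 - 1) j1 (i2 - i1 + 2) (j2 - j1 + 1) ≠
        pers A i1 j1 (i2 - i1 + 1) (j2 - j1 + 1) := by
    intro h0 heq
    simp only [pers, Prod.mk.injEq] at heq
    obtain ⟨_, hpeP⟩ := hper_spec A (i1 - 1) j1 (i2 - i1 + 2) (j2 - j1 + 1)
    obtain ⟨_, hveP⟩ := vper_spec A (i1 - 1) j1 (i2 - i1 + 2) (j2 - j1 + 1)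
    rw [heq.1] at hpeP
    rw [heq.2] at hveP
    have hHw := hperiod_dvd A (i1 - 1) j1 (i2 - i1 + 2) (j2 - j1 + 1) _ w hdvdw hpeP
    have hVh := vperiod_dvd A (i1 - 1) j1 (i2 - i1 + 2) (j2 - j1 + 1) _ h hdvdh hveP
    have e : i2 - (i1 - 1) + 1 = i2 - i1 + 2 := by omega
    have hg : Good2 A n i j h w (i1 - 1) i2 j1 j2 := by
      refine ⟨by omega, by omega, g3, g4, g5, g6, ?_, ?_⟩ <;> rw [e] <;> assumption
    have := hmax _ _ _ _ hg
    omega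
  have hdown : i2 + 1 < n →
      pers A i1 j1 (i2 - i1 + 2) (j2 - j1 + 1) ≠
        pers A i1 j1 (i2 - i1 + 1) (j2 - j1 + 1) := by
    intro h0 heq
    simp only [pers, Prod.mk.injEq] at heq
    obtain ⟨_, hpeP⟩ := hper_spec A i1 j1 (i2 - i1 + 2) (j2 - j1 + 1)
    obtain ⟨_, hveP⟩ := vper_spec A i1 j1 (i2 - i1 + 2) (j2 - j1 + 1)
    rw [heq.1] at hpeP
    rw [heq.2] at hveP
    have hHw := hperiod_dvd A i1 j1 (i2 - i1 + 2) (j2 - j1 + 1) _ w hdvdw hpeP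
    have hVh := vperiod_dvd A i1 j1 (i2 - i1 + 2) (j2 - j1 + 1) _ h hdvdh hveP
    have e : i2 + 1 - i1 + 1 = i2 - i1 + 2 := by omega
    have hg : Good2 A n i j h w i1 (i2 + 1) j1 j2 := by
      refine ⟨g1, by omega, g3, g4, h0, g6, ?_, ?_⟩ <;> rw [e] <;> assumption
    have := hmax _ _ _ _ hg
    omega
  have hleft : 0 < j1 →
      pers A i1 (j1 - 1) (i2 - i1 + 1) (j2 - j1 + 2) ≠
        pers A i1 j1 (i2 - i1 + 1) (j2 - j1 + 1) := by
    intro h0 heq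
    simp only [pers, Prod.mk.injEq] at heq
    obtain ⟨_, hpeP⟩ := hper_spec A i1 (j1 - 1) (i2 - i1 + 1) (j2 - j1 + 2)
    obtain ⟨_, hveP⟩ := vper_spec A i1 (j1 - 1) (i2 - i1 + 1) (j2 - j1 + 2)
    rw [heq.1] at hpeP
    rw [heq.2] at hveP
    have hHw := hperiod_dvd A i1 (j1 - 1) (i2 - i1 + 1) (j2 - j1 + 2) _ w hdvdw hpeP
    have hVh := vperiod_dvd A i1 (j1 - 1) (i2 - i1 + 1) (j2 - j1 + 2) _ h hdvdh hveP
    have e : j2 - (j1 - 1) + 1 = j2 - j1 + 2 := by omega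
    have hg : Good2 A n i j h w i1 i2 (j1 - 1) j2 := by
      refine ⟨g1, g2, by omega, by omega, g5, g6, ?_, ?_⟩ <;> rw [e] <;> assumption
    have := hmax _ _ _ _ hg
    omega
  have hright : j2 + 1 < n →
      pers A i1 j1 (i2 - i1 + 1) (j2 - j1 + 2) ≠
        pers A i1 j1 (i2 - i1 + 1) (j2 - j1 + 1) := by
    intro h0 heq
    simp only [pers, Prod.mk.injEq] at heq
    obtain ⟨_, hpeP⟩ := hper_spec A i1 j1 (i2 - i1 + 1) (j2 - j1 + 2)
    obtain ⟨_, hveP⟩ := vper_spec A i1 j1 (i2 - i1 + 1) (j2 - j1 + 2)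
    rw [heq.1] at hpeP
    rw [heq.2] at hveP
    have hHw := hperiod_dvd A i1 j1 (i2 - i1 + 1) (j2 - j1 + 2) _ w hdvdw hpeP
    have hVh := vperiod_dvd A i1 j1 (i2 - i1 + 1) (j2 - j1 + 2) _ h hdvdh hveP
    have e : j2 + 1 - j1 + 1 = j2 - j1 + 2 := by omega
    have hg : Good2 A n i j h w i1 i2 j1 (j2 + 1) := by
      refine ⟨g1, g2, g3, by omega, g5, h0, ?_, ?_⟩ <;> rw [e] <;> assumption
    have := hmax _ _ _ _ hg
    omega
  exact ⟨i1, i2, j1, j2,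
    ⟨by omega, g5, by omega, g6, by omega, by omega, hup, hdown, hleft, hright⟩,
    g1, g2, g3, g4, hdvdw, hdvdh⟩

end Formal
end

section
/- Let R = A[i1..i2, j1..j2] be a 2D-run of a 2D-string A, with p = hper(R) and q = vper(R). Then for every position (i,j) with i1 ≤ i ≤ i2−2q+1 and j1 ≤ j ≤ j2−2p+1, the subarray A[i..i+2q−1, j..j+2p−1] is a primitively rooted quartic; that is, it equals W^{2,2} where W = A[i..i+q−1, j..j+p−1] is primitive. -/
open scoped Classical

namespace Formal

variable {α : Type*}

/-- Horizontal reduction: inside the window, any entry equals the entry in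
column `y % p`. -/
lemma hreduce (A : ℕ → ℕ → α) {i j r c p : ℕ} (hp : 0 < p)
    (hH : HPeriod A i j r c p) :
    ∀ x < r, ∀ y < c, A (i + x) (j + y) = A (i + x) (j + y % p) := by
  intro x hx y
  induction y using Nat.strong_induction_on with
  | _ y ih =>
    intro hy
    rcases lt_or_ge y p with h | h
    · rw [Nat.mod_eq_of_lt h]
    · have h2 : (y - p) + p < c := by omega
      have this2 := hH x hx (y - p) h2
      rw [show y - p + p = y by omega] at this2
      calc A (i + x) (j + y) = A (i + x) (j + (y - p)) := this2.symm
        _ = A (i + x) (j + (y - p) % p) := ih (y - p) (by omega) (by omega)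
        _ = A (i + x) (j + y % p) := by rw [← Nat.mod_eq_sub_mod h]

/-- Vertical reduction: inside the window, any entry equals the entry in
row `x % q`. -/
lemma vreduce (A : ℕ → ℕ → α) {i j r c q : ℕ} (hq : 0 < q)
    (hV : VPeriod A i j r c q) :
    ∀ y < c, ∀ x < r, A (i + x) (j + y) = A (i + x % q) (j + y) := by
  intro y hy x
  induction x using Nat.strong_induction_on with
  | _ x ih =>
    intro hx
    rcases lt_or_ge x q with h | h
    · rw [Nat.mod_eq_of_lt h]
    · have h2 : (x - q) + q < r := by omega
      have this2 := hV y hy (x - q) h2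
      rw [show x - q + q = x by omega] at this2
      calc A (i + x) (j + y) = A (i + (x - q)) (j + y) := this2.symm
        _ = A (i + (x - q) % q) (j + y) := ih (x - q) (by omega) (by omega)
        _ = A (i + x % q) (j + y) := by rw [← Nat.mod_eq_sub_mod h]

lemma mod_inv_aux (d a q : ℕ) (hq : 0 < q) (ha : a < q) :
    (d + (a + q - d % q) % q) % q = a := by
  have h1 : d % q < q := Nat.mod_lt _ hq
  have h2 : (d + (a + q - d % q) % q) % q = (d % q + (a + q - d % q)) % q :=
    (Nat.mod_modEq d q).symm.add (Nat.mod_modEq _ q)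
  have h3 : d % q + (a + q - d % q) = a + q := by omega
  rw [h2, h3, Nat.add_mod_right, Nat.mod_eq_of_lt ha]

/-- Let `R = A[i1..i2, j1..j2]` be a 2D-run of `A` with
`p = hper(R)` and `q = vper(R)`. Then for every `(i,j)` with `i1 ≤ i ≤ i2−2q+1` and
`j1 ≤ j ≤ j2−2p+1`, the subarray `A[i..i+2q−1, j..j+2p−1]` is a primitively rooted
quartic `W^{2,2}` with primitive root `W = A[i..i+q−1, j..j+p−1]`. -/
theorem run_induces_primitively_rooted_quartics {τ : Type*} (A : ℕ → ℕ → τ)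
    (n i1 i2 j1 j2 : ℕ) (hR : IsRun2D A n i1 i2 j1 j2) (i j : ℕ)
    (hi₁ : i1 ≤ i) (hi₂ : i + 2 * vper A i1 j1 (i2 - i1 + 1) (j2 - j1 + 1) ≤ i2 + 1)
    (hj₁ : j1 ≤ j) (hj₂ : j + 2 * hper A i1 j1 (i2 - i1 + 1) (j2 - j1 + 1) ≤ j2 + 1) :
    OccPow A i j (vper A i1 j1 (i2 - i1 + 1) (j2 - j1 + 1))
        (hper A i1 j1 (i2 - i1 + 1) (j2 - j1 + 1)) 2 2 ∧
      PrimitiveA (fun x y => A (i + x) (j + y))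
        (vper A i1 j1 (i2 - i1 + 1) (j2 - j1 + 1))
        (hper A i1 j1 (i2 - i1 + 1) (j2 - j1 + 1)) := by
  obtain ⟨h12, hi2n, hj12, hj2n, h2p, h2q, -, -, -, -⟩ := hR
  set r := i2 - i1 + 1 with hr
  set c := j2 - j1 + 1 with hc
  set q := vper A i1 j1 r c with hqdef
  set p := hper A i1 j1 r c with hpdef
  have hpmem : p ∈ {t | 0 < t ∧ HPeriod A i1 j1 r c t} := by
    rw [hpdef, hper]
    exact Nat.sInf_mem ⟨c, by omega, fun x _ y hy => absurd hy (by omega)⟩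
  have hqmem : q ∈ {t | 0 < t ∧ VPeriod A i1 j1 r c t} := by
    rw [hqdef, vper]
    exact Nat.sInf_mem ⟨r, by omega, fun y _ x hx => absurd hx (by omega)⟩
  obtain ⟨hp0, hP⟩ := hpmem
  obtain ⟨hq0, hV⟩ := hqmem
  have hpmin : ∀ t, 0 < t → HPeriod A i1 j1 r c t → p ≤ t := by
    intro t h1 h2; rw [hpdef, hper]; exact Nat.sInf_le ⟨h1, h2⟩
  have hqmin : ∀ t, 0 < t → VPeriod A i1 j1 r c t → q ≤ t := by
    intro t h1 h2; rw [hqdef, vper]; exact Nat.sInf_le ⟨h1, h2⟩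
  have hred : ∀ x < r, ∀ y < c, A (i1 + x) (j1 + y) = A (i1 + x % q) (j1 + y % p) := by
    intro x hx y hy
    rw [hreduce A hp0 hP x hx y hy,
      vreduce A hq0 hV (y % p) (by have := Nat.mod_lt y hp0; omega) x hx]
  -- inverse representation of run entries through the window at (i,j)
  have winv : ∀ a < q, ∀ b < p, A (i1 + a) (j1 + b) =
      A (i + (a + q - (i - i1) % q) % q) (j + (b + p - (j - j1) % p) % p) := by
    intro a ha b hb
    have hu : (a + q - (i - i1) % q) % q < q := Nat.mod_lt _ hq0
    have hv : (b + p - (j - j1) % p) % p < p := Nat.mod_lt _ hp0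
    have e1 : i + (a + q - (i - i1) % q) % q =
        i1 + ((i - i1) + (a + q - (i - i1) % q) % q) := by omega
    have e2 : j + (b + p - (j - j1) % p) % p =
        j1 + ((j - j1) + (b + p - (j - j1) % p) % p) := by omega
    have key := hred ((i - i1) + (a + q - (i - i1) % q) % q) (by omega)
      ((j - j1) + (b + p - (j - j1) % p) % p) (by omega)
    rw [mod_inv_aux (i - i1) a q hq0 ha, mod_inv_aux (j - j1) b p hp0 hb] at key
    rw [e1, e2]
    exact key.symm
  constructor
  · -- OccPow
    intro x hx y hy
    have e1 : A (i + x) (j + y) = A (i + x) (j + y % p) := by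
      rcases lt_or_ge y p with h | h
      · rw [Nat.mod_eq_of_lt h]
      · have hstep := hP ((i - i1) + x) (by omega) ((j - j1) + (y - p)) (by omega)
        rw [show i1 + ((i - i1) + x) = i + x by omega,
          show j1 + ((j - j1) + (y - p)) = j + (y - p) by omega,
          show j1 + ((j - j1) + (y - p) + p) = j + y by omega] at hstep
        rw [← hstep, Nat.mod_eq_sub_mod h, Nat.mod_eq_of_lt (show y - p < p by omega)]
    have e2 : A (i + x) (j + y % p) = A (i + x % q) (j + y % p) := by
      rcases lt_or_ge x q with h | h
      · rw [Nat.mod_eq_of_lt h]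
      · have hyp : y % p < p := Nat.mod_lt _ hp0
        have hstep := hV ((j - j1) + y % p) (by omega) ((i - i1) + (x - q)) (by omega)
        rw [show j1 + ((j - j1) + y % p) = j + y % p by omega,
          show i1 + ((i - i1) + (x - q)) = i + (x - q) by omega,
          show i1 + ((i - i1) + (x - q) + q) = i + x by omega] at hstep
        rw [← hstep, Nat.mod_eq_sub_mod h, Nat.mod_eq_of_lt (show x - q < q by omega)]
    exact e1.trans e2
  · -- Primitivity
    refine ⟨hq0, hp0, ?_⟩
    intro p' q' hp'0 hq'0 hp'dvd hq'dvd htile0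
    have htile : ∀ x < q, ∀ y < p, A (i + x) (j + y) = A (i + x % p') (j + y % q') := by
      intro x hx y hy; simpa using htile0 x hx y hy
    -- row/column invariance of local window entries modulo p', q'
    have hHq' : HPeriod A i1 j1 r c q' := by
      intro x hx y hyc
      rw [hred x hx y (by omega), hred x hx (y + q') (by omega)]
      have ha : x % q < q := Nat.mod_lt _ hq0
      have hb : y % p < p := Nat.mod_lt _ hp0
      have hb' : (y + q') % p < p := Nat.mod_lt _ hp0
      rw [winv _ ha _ hb, winv _ ha _ hb']
      have hu : (x % q + q - (i - i1) % q) % q < q := Nat.mod_lt _ hq0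
      have hv1 : (y % p + p - (j - j1) % p) % p < p := Nat.mod_lt _ hp0
      have hv2 : ((y + q') % p + p - (j - j1) % p) % p < p := Nat.mod_lt _ hp0
      rw [htile _ hu _ hv1, htile _ hu _ hv2]
      have hbb' : y % p % q' = (y + q') % p % q' := by
        have h1 : y % p % q' = y % q' := Nat.mod_mod_of_dvd y hq'dvd
        have h2 : (y + q') % p % q' = (y + q') % q' := Nat.mod_mod_of_dvd _ hq'dvd
        rw [h1, h2, Nat.add_mod_right]
      have hvv : (y % p + p - (j - j1) % p) % p % q' =
          ((y + q') % p + p - (j - j1) % p) % p % q' := by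
        have ht : (j - j1) % p < p := Nat.mod_lt _ hp0
        rw [Nat.mod_mod_of_dvd _ hq'dvd, Nat.mod_mod_of_dvd _ hq'dvd,
          show y % p + p - (j - j1) % p = y % p + (p - (j - j1) % p) by omega,
          show (y + q') % p + p - (j - j1) % p = (y + q') % p + (p - (j - j1) % p) by omega,
          Nat.add_mod, Nat.add_mod ((y + q') % p), hbb']
      rw [hvv]
    have hVp' : VPeriod A i1 j1 r c p' := by
      intro y hyc x hx
      rw [hred x (by omega) y hyc, hred (x + p') (by omega) y hyc]
      have hb : y % p < p := Nat.mod_lt _ hp0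
      have ha : x % q < q := Nat.mod_lt _ hq0
      have ha' : (x + p') % q < q := Nat.mod_lt _ hq0
      rw [winv _ ha _ hb, winv _ ha' _ hb]
      have hv : (y % p + p - (j - j1) % p) % p < p := Nat.mod_lt _ hp0
      have hu1 : (x % q + q - (i - i1) % q) % q < q := Nat.mod_lt _ hq0
      have hu2 : ((x + p') % q + q - (i - i1) % q) % q < q := Nat.mod_lt _ hq0
      rw [htile _ hu1 _ hv, htile _ hu2 _ hv]
      have haa' : x % q % p' = (x + p') % q % p' := by
        rw [Nat.mod_mod_of_dvd x hp'dvd, Nat.mod_mod_of_dvd _ hp'dvd, Nat.add_mod_right]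
      have huu : (x % q + q - (i - i1) % q) % q % p' =
          ((x + p') % q + q - (i - i1) % q) % q % p' := by
        have ht : (i - i1) % q < q := Nat.mod_lt _ hq0
        rw [Nat.mod_mod_of_dvd _ hp'dvd, Nat.mod_mod_of_dvd _ hp'dvd,
          show x % q + q - (i - i1) % q = x % q + (q - (i - i1) % q) by omega,
          show (x + p') % q + q - (i - i1) % q = (x + p') % q + (q - (i - i1) % q) by omega,
          Nat.add_mod, Nat.add_mod ((x + p') % q), haa']
      rw [huu]
    exact ⟨Nat.le_antisymm (Nat.le_of_dvd hq0 hp'dvd) (hqmin p' hp'0 hVp'),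
      Nat.le_antisymm (Nat.le_of_dvd hp0 hq'dvd) (hpmin q' hq'0 hHq')⟩

end Formal
end
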